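/- arXiv:1408.2112 — 10 statements merged into one kernel-verified Lean document; each statement's English description precedes it below -/
import Mathlib

section
/- Let (X,T) be a minimal Cantor system such that the infinitesimal subgroup of K⁰(X,T) is trivial, i.e., every f ∈ C(X,ℤ) with ∫ f dμ = 0 for all μ ∈ M(X,T) is of the form f = g∘T − g for some g ∈ C(X,ℤ). Then the quotient group I(X,T)/E(X,T) is torsion free; explicitly, for every α ∈ ℝ and every integer k ≥ 1, if α ∈ I(X,T) and k·α ∈ E(X,T), then α ∈ E(X,T). -/
/-!
Minimality forces an eigenfunction `f` for `kα` to have constant modulus, and on a compact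
totally disconnected space a nowhere vanishing continuous function has a continuous logarithm.
Hence `f = |f| exp (2πi H)` with `H` continuous and `n := H ∘ T - H - kα` continuous and integer
valued; integrating against an invariant measure gives `∫ n dμ = -kα`.

Because `C(X, ℤ)` is countable, `α ∈ I(X, T)` upgrades to a single `f₀ ∈ C(X, ℤ)` with
`∫ f₀ dμ = α` for every invariant `μ`: otherwise choose for each candidate `fⱼ` an invariant `νⱼ`
with `∫ fⱼ dνⱼ ≠ α`; the integrals of `fⱼ - α` against the invariant mixtures
`∑ₘ (1 - s) sᵐ νₘ`, `0 < s < 1`, are power series in `s`, and by Baire one of them vanishes on an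
interval, hence identically, contradicting the choice of `νⱼ`.

Then `n + k f₀` has zero integral against every invariant measure, so it equals `g ∘ T - g`, and
`exp (2πi (H - g) / k)` is an eigenfunction for `α`.
-/

open MeasureTheory Set Filter Topology TopologicalSpace FormalMultilinearSeries

section PowerSeries

variable {c : ℕ → ℝ} {B : ℝ}

theorem hasFPowerSeriesOnBall_ofScalars_sum_of_bounded (hB : ∀ m, |c m| ≤ B) :
    HasFPowerSeriesOnBall (ofScalars ℝ c).sum (ofScalars ℝ c) 0 1 := by
  have hrad : 1 ≤ (ofScalars ℝ c).radius := by
    simpa using (ofScalars ℝ c).le_radius_of_bound B (r := 1) fun m => by simpa using hB m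
  exact ((ofScalars ℝ c).hasFPowerSeriesOnBall (zero_lt_one.trans_le hrad)).mono one_pos hrad

theorem analyticOnNhd_ofScalars_sum_of_bounded (hB : ∀ m, |c m| ≤ B) :
    AnalyticOnNhd ℝ (ofScalars ℝ c).sum (Ioo (-1) 1) :=
  (hasFPowerSeriesOnBall_ofScalars_sum_of_bounded hB).analyticOnNhd.mono fun s hs => by
    rw [Metric.mem_eball, edist_zero_right, enorm_eq_nnnorm]
    have : |s| < 1 := abs_lt.mpr hs
    exact_mod_cast this

theorem eq_zero_of_ofScalars_sum_eventuallyEq_zero (hB : ∀ m, |c m| ≤ B) {s₀ : ℝ}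
    (hs₀ : s₀ ∈ Ioo (-1) 1) (h : (ofScalars ℝ c).sum =ᶠ[𝓝 s₀] 0) : c = 0 := by
  have hzero : EqOn (ofScalars ℝ c).sum 0 (Ioo (-1) 1) :=
    (analyticOnNhd_ofScalars_sum_of_bounded hB).eqOn_zero_of_preconnected_of_eventuallyEq_zero
      isPreconnected_Ioo hs₀ h
  have hp : ofScalars ℝ c = 0 :=
    (hasFPowerSeriesOnBall_ofScalars_sum_of_bounded hB).hasFPowerSeriesAt.eq_zero_of_eventually <|
      eventuallyEq_of_mem (Ioo_mem_nhds (by norm_num) (by norm_num)) hzero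
  exact (ofScalars_series_eq_zero ℝ).mp hp

end PowerSeries

theorem exists_eq_zero_of_forall_exists_tsum_mul_pow_eq_zero {ι : Type*} [Countable ι]
    (c : ι → ℕ → ℝ) (hc : ∀ i, ∃ B, ∀ m, |c i m| ≤ B)
    (h : ∀ s ∈ Ioo (0 : ℝ) 1, ∃ i, ∑' m, c i m * s ^ m = 0) : ∃ i, c i = 0 := by
  choose B hB using hc
  have : LocallyCompactSpace (Ioo (0 : ℝ) 1) := isOpen_Ioo.locallyCompactSpace
  have : Nonempty (Ioo (0 : ℝ) 1) := ⟨⟨1 / 2, by norm_num, by norm_num⟩⟩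
  have hsub : Ioo (0 : ℝ) 1 ⊆ Ioo (-1) 1 := Ioo_subset_Ioo_left (by norm_num)
  set Z : ι → Set (Ioo (0 : ℝ) 1) := fun i => {s | (ofScalars ℝ (c i)).sum s = 0}
  have hZ (i : ι) : IsClosed (Z i) :=
    isClosed_eq ((analyticOnNhd_ofScalars_sum_of_bounded (hB i)).continuousOn.mono
      hsub).domRestrict continuous_const
  have hcover : ⋃ i, Z i = univ := eq_univ_of_forall fun s => by
    obtain ⟨i, hi⟩ := h s s.2
    exact mem_iUnion.mpr ⟨i, (ofScalars_sum_eq (c i) (s : ℝ)).trans (by simpa using hi)⟩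
  obtain ⟨i, s₀, hs₀⟩ := nonempty_interior_of_iUnion_of_closed hZ hcover
  refine ⟨i, eq_zero_of_ofScalars_sum_eventuallyEq_zero (hB i) (hsub s₀.2) ?_⟩
  rw [← isOpen_Ioo.isOpenEmbedding_subtypeVal.map_nhds_eq]
  exact eventually_map.mpr (mem_interior_iff_mem_nhds.mp hs₀)

section Topology

variable {X : Type*} [TopologicalSpace X]

theorem countable_continuousMap_int [CompactSpace X] [MetrizableSpace X] :
    Countable C(X, ℤ) := by
  let := metrizableSpaceMetric X
  have : DiscreteTopology C(X, ℤ) := .of_forall_le_dist one_pos fun f g hfg => by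
    obtain ⟨x, hx⟩ := DFunLike.ne_iff.mp hfg
    calc (1 : ℝ) ≤ dist (f x) (g x) := by
          rw [Int.dist_eq']; exact_mod_cast Int.one_le_abs (sub_ne_zero.mpr hx)
      _ ≤ dist f g := ContinuousMap.dist_apply_le_dist x
  exact separableSpace_iff_countable.mp inferInstance

theorem apply_eq_of_dense_orbit {Y : Type*} [TopologicalSpace Y] [T2Space Y] (T : X ≃ₜ X)
    (hmin : ∀ x : X, Dense (range fun n : ℤ => (T.toEquiv ^ n) x)) {φ : X → Y}
    (hφ : Continuous φ) (hinv : ∀ x, φ (T x) = φ x) (x y : X) : φ x = φ y := by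
  have horbit : ∀ n : ℤ, φ ((T.toEquiv ^ n) y) = φ y := by
    intro n
    induction n using Int.induction_on with
    | zero => rfl
    | succ n ih => rw [add_comm, zpow_add, zpow_one, Equiv.Perm.mul_apply, ← ih]; exact hinv _
    | pred n ih =>
      rw [sub_eq_neg_add, zpow_add, zpow_neg_one, Equiv.Perm.mul_apply, ← ih, ← hinv]
      simp
  have hclosed : IsClosed {z | φ z = φ y} := isClosed_eq hφ continuous_const
  exact closure_minimal (range_subset_iff.mpr horbit) hclosed (hmin y x)

def HasContinuousLogOn (u : X → ℂ) (s : Set X) : Prop :=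
  ∃ L : X → ℂ, ContinuousOn L s ∧ ∀ x ∈ s, Complex.exp (L x) = u x

theorem hasContinuousLogOn_div_mem_slitPlane {u : X → ℂ} (hu : Continuous u) {y : X}
    (hy : u y ≠ 0) : HasContinuousLogOn u {x | u x / u y ∈ Complex.slitPlane} := by
  refine ⟨fun x => Complex.log (u y) + Complex.log (u x / u y), fun x hx => ?_, fun x hx => ?_⟩
  · exact (continuousAt_const.add ((hu.continuousAt.div_const _).clog hx)).continuousWithinAt
  · rw [Complex.exp_add, Complex.exp_log hy, Complex.exp_log (Complex.slitPlane_ne_zero hx),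
      mul_div_cancel₀ _ hy]

theorem HasContinuousLogOn.union {u : X → ℂ} {s t : Set X} (hs : HasContinuousLogOn u s)
    (ht : HasContinuousLogOn u t) (hs' : IsClopen s) : HasContinuousLogOn u (s ∪ t) := by
  classical
  obtain ⟨L, hL, hLu⟩ := hs
  obtain ⟨M, hM, hMu⟩ := ht
  refine ⟨s.piecewise L M, ?_, ?_⟩
  · refine ContinuousOn.piecewise (by simp [hs'.frontier_eq]) (hL.mono ?_) (hM.mono ?_)
    · rw [hs'.isClosed.closure_eq]; exact inter_subset_right
    · rw [hs'.isOpen.isClosed_compl.closure_eq]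
      rintro x ⟨hx | hx, hxs⟩
      · exact absurd hx hxs
      · exact hx
  · intro x hx
    by_cases hxs : x ∈ s
    · rw [piecewise_eq_of_mem _ _ _ hxs, hLu x hxs]
    · rw [piecewise_eq_of_notMem _ _ _ hxs, hMu x (hx.resolve_left hxs)]

theorem Continuous.exists_continuous_exp_eq [CompactSpace X] [T2Space X]
    [TotallyDisconnectedSpace X] {u : X → ℂ} (hu : Continuous u) (hu0 : ∀ x, u x ≠ 0) :
    ∃ L : X → ℂ, Continuous L ∧ ∀ x, Complex.exp (L x) = u x := by
  obtain ⟨C, hC, L, hL, hLu⟩ : ∃ C, univ ⊆ C ∧ HasContinuousLogOn u C := by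
    refine isCompact_univ.induction_on
      (p := fun s => ∃ C, IsClopen C ∧ s ⊆ C ∧ HasContinuousLogOn u C) ?_ ?_ ?_ ?_
      |>.imp fun C hC => hC.2
    · exact ⟨∅, isClopen_empty, subset_rfl, 0, continuousOn_empty _, by simp⟩
    · rintro s t hst ⟨C, hC, htC, hCu⟩
      exact ⟨C, hC, hst.trans htC, hCu⟩
    · rintro s t ⟨C, hC, hsC, hCu⟩ ⟨D, hD, htD, hDu⟩
      exact ⟨C ∪ D, hC.union hD, union_subset_union hsC htD, hCu.union hDu hC⟩
    · intro y _
      have hW : {x | u x / u y ∈ Complex.slitPlane} ∈ 𝓝 y :=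
        (Complex.isOpen_slitPlane.preimage (hu.div_const _)).mem_nhds
          (by simp [div_self (hu0 y)])
      obtain ⟨C, ⟨hyC, hC⟩, hCW⟩ := (nhds_basis_clopen y).mem_iff.mp hW
      obtain ⟨L, hL, hLu⟩ := hasContinuousLogOn_div_mem_slitPlane hu (hu0 y)
      exact ⟨C, nhdsWithin_le_nhds (hC.isOpen.mem_nhds hyC), C, hC, subset_rfl,
        L, hL.mono hCW, fun x hx => hLu x (hCW hx)⟩
  exact ⟨L, continuousOn_univ.mp (hL.mono hC), fun x => hLu x (hC trivial)⟩

theorem exists_continuousMap_int_of_forall_eq_intCast {φ : X → ℝ} (hφ : Continuous φ)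
    (h : ∀ x, ∃ n : ℤ, φ x = n) :
    ∃ n : C(X, ℤ), ∀ x, (n x : ℝ) = φ x := by
  choose n hn using h
  have hcont : Continuous (((↑) : ℤ → ℝ) ∘ n) := by
    simpa only [Function.comp_def, ← hn] using hφ
  exact ⟨⟨n, Int.isClosedEmbedding_coe_real.continuous_iff.mpr hcont⟩, fun x => (hn x).symm⟩

def IsContinuousEigenvalue (T : X → X) (β : ℝ) : Prop :=
  ∃ f : C(X, ℂ), f ≠ 0 ∧ ∀ x, f (T x) = Complex.exp (2 * Real.pi * Complex.I * β) * f x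

theorem isContinuousEigenvalue_of_eq_add_intCast [Nonempty X] {T : X → X} {β : ℝ}
    {H : X → ℝ} (hH : Continuous H) (n : X → ℤ) (hHn : ∀ x, H (T x) = H x + β + n x) :
    IsContinuousEigenvalue T β := by
  refine ⟨⟨fun x => Complex.exp (2 * Real.pi * Complex.I * H x), by fun_prop⟩, ?_,
    fun x => ?_⟩
  · intro h0
    exact Complex.exp_ne_zero _ (DFunLike.congr_fun h0 (Classical.arbitrary X))
  · have : 2 * Real.pi * Complex.I * (H (T x) : ℝ) = 2 * Real.pi * Complex.I * β
        + 2 * Real.pi * Complex.I * H x + n x * (2 * Real.pi * Complex.I) := by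
      rw [hHn]; push_cast; ring
    simp only [ContinuousMap.coe_mk, this, Complex.exp_add, Complex.exp_int_mul_two_pi_mul_I,
      mul_one]

theorem IsContinuousEigenvalue.exists_eq_add_intCast [CompactSpace X] [T2Space X]
    [TotallyDisconnectedSpace X] (T : X ≃ₜ X)
    (hmin : ∀ x : X, Dense (range fun n : ℤ => (T.toEquiv ^ n) x)) {β : ℝ}
    (hβ : IsContinuousEigenvalue T β) :
    ∃ (H : X → ℝ) (n : C(X, ℤ)), Continuous H ∧ ∀ x, H (T x) = H x + β + n x := by
  obtain ⟨f, hf0, hf⟩ := hβ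
  obtain ⟨x₀, hx₀⟩ : ∃ x, f x ≠ 0 := by
    by_contra! h
    exact hf0 (ContinuousMap.ext h)
  have hnorm (x : X) : ‖f x‖ = ‖f x₀‖ :=
    apply_eq_of_dense_orbit T hmin (continuous_norm.comp f.continuous)
      (fun x => by simp [hf, Complex.norm_exp]) x x₀
  have hf_ne (x : X) : f x ≠ 0 := norm_ne_zero_iff.mp (hnorm x ▸ norm_ne_zero_iff.mpr hx₀)
  obtain ⟨L, hL, hLf⟩ := f.continuous.exists_continuous_exp_eq hf_ne
  set H : X → ℝ := fun x => (L x).im / (2 * Real.pi)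
  have hH : Continuous H := (Complex.continuous_im.comp hL).div_const _
  have hint : ∀ x, ∃ n : ℤ, H (T x) - H x - β = n := by
    intro x
    have hexp : Complex.exp (L (T x)) = Complex.exp (2 * Real.pi * Complex.I * β + L x) := by
      rw [Complex.exp_add, hLf, hLf, hf]
    obtain ⟨n, hn⟩ := Complex.exp_eq_exp_iff_exists_int.mp hexp
    refine ⟨n, ?_⟩
    have him : (L (T x)).im = 2 * Real.pi * β + (L x).im + n * (2 * Real.pi) := by
      simpa using congrArg Complex.im hn
    simp only [H, him]
    field_simp
    ring
  obtain ⟨n, hn⟩ := exists_continuousMap_int_of_forall_eq_intCast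
    ((hH.comp T.continuous).sub hH |>.sub continuous_const) hint
  exact ⟨H, n, hH, fun x => by simp only [hn, Pi.sub_apply, Function.comp_apply]; ring⟩

end Topology

section InvariantMeasures

variable {X : Type*} [MeasurableSpace X]

noncomputable def geomMixture (ν : ℕ → Measure X) (s : ℝ) : Measure X :=
  Measure.sum fun m => ENNReal.ofReal ((1 - s) * s ^ m) • ν m

variable {ν : ℕ → Measure X} {s : ℝ}

theorem isProbabilityMeasure_geomMixture (hν : ∀ m, IsProbabilityMeasure (ν m))
    (hs : s ∈ Ico 0 1) : IsProbabilityMeasure (geomMixture ν s) := by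
  obtain ⟨hs0, hs1⟩ := hs
  constructor
  have hweight (m : ℕ) :
      ENNReal.ofReal ((1 - s) * s ^ m) = ENNReal.ofReal (1 - s) * ENNReal.ofReal s ^ m := by
    rw [ENNReal.ofReal_mul (by linarith), ENNReal.ofReal_pow hs0]
  simp only [geomMixture, Measure.sum_apply _ MeasurableSet.univ, Measure.smul_apply,
    measure_univ, smul_eq_mul, mul_one, hweight, ENNReal.tsum_mul_left, ENNReal.tsum_geometric]
  rw [← ENNReal.ofReal_one, ← ENNReal.ofReal_sub _ hs0, ENNReal.ofReal_one]
  exact ENNReal.mul_inv_cancel (by simp; linarith) ENNReal.ofReal_ne_top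

theorem map_geomMixture {T : X → X} (hT : Measurable T)
    (hν : ∀ m, Measure.map T (ν m) = ν m) :
    Measure.map T (geomMixture ν s) = geomMixture ν s := by
  simp only [geomMixture, Measure.map_sum hT.aemeasurable, Measure.map_smul, hν]

theorem integral_geomMixture (hs : s ∈ Ico 0 1) {φ : X → ℝ}
    (hφ : Integrable φ (geomMixture ν s)) :
    ∫ x, φ x ∂geomMixture ν s = (1 - s) * ∑' m, (∫ x, φ x ∂ν m) * s ^ m := by
  rw [geomMixture, integral_sum_measure hφ, ← tsum_mul_left]
  refine tsum_congr fun m => ?_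
  rw [integral_smul_measure, ENNReal.toReal_ofReal (mul_nonneg (by linarith [hs.2])
    (pow_nonneg hs.1 m)), smul_eq_mul]
  ring

theorem integral_sub_const {μ : Measure X} [IsProbabilityMeasure μ] {φ : X → ℝ}
    (hφ : Integrable φ μ) (β : ℝ) : ∫ x, (φ x - β) ∂μ = ∫ x, φ x ∂μ - β := by
  simp [integral_sub hφ (integrable_const β)]

variable [TopologicalSpace X] [CompactSpace X] [OpensMeasurableSpace X]

theorem Continuous.integrable_of_compactSpace {E : Type*} [NormedAddCommGroup E] {μ : Measure X}
    [IsFiniteMeasure μ] {φ : X → E} (hφ : Continuous φ) : Integrable φ μ :=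
  hφ.integrable_of_hasCompactSupport (HasCompactSupport.of_compactSpace _)

theorem exists_forall_integral_eq_zero_of_forall_exists {T : X → X} (hT : Measurable T)
    {ι : Type*} [Countable ι] [Nonempty ι] (φ : ι → C(X, ℝ))
    (h : ∀ μ : Measure X, IsProbabilityMeasure μ → Measure.map T μ = μ →
      ∃ i, ∫ x, φ i x ∂μ = 0) :
    ∃ i, ∀ μ : Measure X, IsProbabilityMeasure μ → Measure.map T μ = μ →
      ∫ x, φ i x ∂μ = 0 := by
  by_contra! hbad
  obtain ⟨e, he⟩ := exists_surjective_nat ι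
  choose ν hνp hνT hν0 using fun j => hbad (e j)
  set c : ℕ → ℕ → ℝ := fun j m => ∫ x, φ (e j) x ∂ν m
  have hc (j : ℕ) : ∃ B, ∀ m, |c j m| ≤ B := ⟨‖φ (e j)‖, fun m => by
    simpa using norm_integral_le_of_norm_le_const (μ := ν m)
      (Eventually.of_forall fun x => (φ (e j)).norm_coe_le_norm x)⟩
  obtain ⟨j, hj⟩ := exists_eq_zero_of_forall_exists_tsum_mul_pow_eq_zero c hc fun s hs => by
    have hs' : s ∈ Ico 0 1 := Ioo_subset_Ico_self hs
    have := isProbabilityMeasure_geomMixture hνp hs'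
    obtain ⟨i, hi⟩ := h _ this (map_geomMixture hT hνT)
    obtain ⟨j, rfl⟩ := he i
    rw [integral_geomMixture hs' (φ (e j)).continuous.integrable_of_compactSpace] at hi
    exact ⟨j, (mul_eq_zero.mp hi).resolve_left (by linarith [hs.2])⟩
  exact hν0 j (congrFun hj j)

theorem exists_forall_integral_intCast_eq [MetrizableSpace X] {T : X → X} (hT : Measurable T)
    {α : ℝ}
    (hα : ∀ μ : Measure X, IsProbabilityMeasure μ → Measure.map T μ = μ →
      ∃ f : C(X, ℤ), ∫ x, (f x : ℝ) ∂μ = α) :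
    ∃ f : C(X, ℤ), ∀ μ : Measure X, IsProbabilityMeasure μ → Measure.map T μ = μ →
      ∫ x, (f x : ℝ) ∂μ = α := by
  have := countable_continuousMap_int (X := X)
  let φ (f : C(X, ℤ)) : C(X, ℝ) :=
    ⟨fun x => (f x : ℝ) - α,
      (continuous_of_discreteTopology.comp f.continuous).sub continuous_const⟩
  have hφ (μ : Measure X) [IsProbabilityMeasure μ] (f : C(X, ℤ)) :
      ∫ x, φ f x ∂μ = ∫ x, (f x : ℝ) ∂μ - α :=
    integral_sub_const (φ := fun x => (f x : ℝ))
      (continuous_of_discreteTopology.comp f.continuous).integrable_of_compactSpace α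
  obtain ⟨f, hf⟩ := exists_forall_integral_eq_zero_of_forall_exists hT φ fun μ hμ hμT => by
    obtain ⟨f, hf⟩ := hα μ hμ hμT
    exact ⟨f, by rw [hφ, hf, sub_self]⟩
  exact ⟨f, fun μ hμ hμT => sub_eq_zero.mp ((hφ μ f).symm.trans (hf μ hμ hμT))⟩

theorem integral_eq_neg_of_forall_apply_eq_add {T : X → X} (hT : Measurable T) {μ : Measure X}
    [IsProbabilityMeasure μ] (hμ : Measure.map T μ = μ) {H ψ : X → ℝ} {β : ℝ}
    (hH : Continuous H) (hHψ : ∀ x, H (T x) = H x + β + ψ x) : ∫ x, ψ x ∂μ = -β := by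
  have hψ : ψ = fun x => H (T x) - H x - β := funext fun x => by linarith [hHψ x]
  have hHT : Integrable (fun x => H (T x)) μ :=
    (hμ.symm ▸ hH.integrable_of_compactSpace : Integrable H (Measure.map T μ)).comp_measurable hT
  have hinv : ∫ x, H (T x) ∂μ = ∫ x, H x ∂μ := by
    conv_rhs => rw [← hμ]
    exact (integral_map hT.aemeasurable hH.aestronglyMeasurable).symm
  calc ∫ x, ψ x ∂μ = ∫ x, (H (T x) - H x - β) ∂μ := by rw [hψ]
    _ = ∫ x, H (T x) ∂μ - ∫ x, H x ∂μ - β := by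
      rw [integral_sub_const (φ := fun x => H (T x) - H x)
          (hHT.sub hH.integrable_of_compactSpace),
        integral_sub hHT hH.integrable_of_compactSpace]
    _ = -β := by rw [hinv]; ring

end InvariantMeasures

theorem stmt0_general {X : Type*} [TopologicalSpace X] [CompactSpace X] [TopologicalSpace.MetrizableSpace X]
    [TotallyDisconnectedSpace X] [Nonempty X] [MeasurableSpace X] [BorelSpace X]
    (T : X ≃ₜ X)
    (hmin : ∀ x : X, Dense (Set.range fun n : ℤ => (T.toEquiv ^ n) x))
    (hinf : ∀ f : C(X, ℤ),
      (∀ μ : Measure X, IsProbabilityMeasure μ → Measure.map T μ = μ →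
        ∫ x, (f x : ℝ) ∂μ = 0) →
      ∃ g : C(X, ℤ), ∀ x : X, f x = g (T x) - g x)
    (α : ℝ) (k : ℤ) (hk : 1 ≤ k)
    (hαI : ∀ μ : Measure X, IsProbabilityMeasure μ → Measure.map T μ = μ →
      ∃ f : C(X, ℤ), ∫ x, (f x : ℝ) ∂μ = α)
    (hkα : ∃ f : C(X, ℂ), f ≠ 0 ∧
      ∀ x : X, f (T x) = Complex.exp (2 * Real.pi * Complex.I * ((k : ℝ) * α)) * f x) :
    ∃ f : C(X, ℂ), f ≠ 0 ∧
      ∀ x : X, f (T x) = Complex.exp (2 * Real.pi * Complex.I * α) * f x := by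
  obtain ⟨f, hf⟩ := exists_forall_integral_intCast_eq T.measurable hαI
  obtain ⟨H, n, hH, hHn⟩ := IsContinuousEigenvalue.exists_eq_add_intCast T hmin
    (β := k * α) (by simpa only [IsContinuousEigenvalue, Complex.ofReal_mul] using hkα)
  obtain ⟨g, hg⟩ := hinf (n + k • f) fun μ hμ hμT => by
    have hcast (x : X) : (((n + k • f) x : ℤ) : ℝ) = n x + k * f x := by simp
    have hint (φ : C(X, ℤ)) : Integrable (fun x => (φ x : ℝ)) μ :=
      (continuous_of_discreteTopology.comp φ.continuous).integrable_of_compactSpace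
    rw [integral_congr_ae (.of_forall hcast), integral_add (hint n) ((hint f).const_mul _),
      integral_const_mul, hf μ hμ hμT,
      integral_eq_neg_of_forall_apply_eq_add T.measurable hμT hH hHn, neg_add_cancel]
  have hk0 : (k : ℝ) ≠ 0 := by exact_mod_cast (by omega : k ≠ 0)
  refine isContinuousEigenvalue_of_eq_add_intCast (H := fun x => (H x - g x) / k)
    (by fun_prop) (fun x => -f x) fun x => ?_
  have hgx : (n x : ℝ) + k * f x = g (T x) - g x := by exact_mod_cast by simpa using hg x
  field_simp
  push_cast
  linarith [hHn x]

/-- If `(X,T)` is a minimal Cantor system whose infinitesimal subgroup of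
`K⁰(X,T)` is trivial (every continuous integer-valued function with zero integral against
every invariant probability measure is a coboundary), then `I(X,T)/E(X,T)` is torsion free:
if `α ∈ I(X,T)` and `k·α ∈ E(X,T)` for some integer `k ≥ 1`, then `α ∈ E(X,T)`. -/
theorem stmt0 {X : Type*} [TopologicalSpace X] [CompactSpace X] [TopologicalSpace.MetrizableSpace X]
    [TotallyDisconnectedSpace X] [Nonempty X] [MeasurableSpace X] [BorelSpace X]
    (hni : ∀ x : X, ¬IsOpen ({x} : Set X))
    (T : X ≃ₜ X)
    (hmin : ∀ x : X, Dense (Set.range fun n : ℤ => (T.toEquiv ^ n) x))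
    (hinf : ∀ f : C(X, ℤ),
      (∀ μ : Measure X, IsProbabilityMeasure μ → Measure.map T μ = μ →
        ∫ x, (f x : ℝ) ∂μ = 0) →
      ∃ g : C(X, ℤ), ∀ x : X, f x = g (T x) - g x)
    (α : ℝ) (k : ℤ) (hk : 1 ≤ k)
    (hαI : ∀ μ : Measure X, IsProbabilityMeasure μ → Measure.map T μ = μ →
      ∃ f : C(X, ℤ), ∫ x, (f x : ℝ) ∂μ = α)
    (hkα : ∃ f : C(X, ℂ), f ≠ 0 ∧
      ∀ x : X, f (T x) = Complex.exp (2 * Real.pi * Complex.I * ((k : ℝ) * α)) * f x) :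
    ∃ f : C(X, ℂ), f ≠ 0 ∧
      ∀ x : X, f (T x) = Complex.exp (2 * Real.pi * Complex.I * α) * f x :=
  stmt0_general T hmin hinf α k hk hαI hkα
end

section
/- For every minimal Cantor system (X,T), the group of additive continuous eigenvalues E(X,T) is a subgroup of the image subgroup I(X,T): for every α ∈ E(X,T) and every μ ∈ M(X,T), there exists f ∈ C(X,ℤ) with ∫ f dμ = α. -/
/-!
An eigenfunction `F` has `T`-invariant modulus, so by minimality it vanishes nowhere. On a compact
zero-dimensional space a nowhere vanishing function has a continuous logarithm `H`, and the
eigenvalue equation says that `α + (H - H ∘ T) / (2πi)` takes integer values, hence lies in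
`C(X, ℤ)`. Its integral against an invariant measure is `α`, since `∫ H ∘ T dμ = ∫ H dμ`.
-/

open Complex MeasureTheory Set Topology
open scoped Real

namespace ContinuousMap

variable {X : Type*} [TopologicalSpace X]

theorem exists_exp_eq_of_forall_ne_zero [CompactSpace X] [T2Space X] [TotallyDisconnectedSpace X]
    (f : C(X, ℂ)) (hf : ∀ x, f x ≠ 0) : ∃ H : C(X, ℂ), ∀ x, exp (H x) = f x := by
  let u : C(X, ℂˣ) :=
    ⟨fun x ↦ Units.mk0 (f x) (hf x), Units.isEmbedding_val₀.continuous_iff.2 f.continuous⟩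
  let S : Set (ℂˣ × ℂˣ) := {p | ((p.1 / p.2 : ℂˣ) : ℂ) ∈ slitPlane}
  have hS : S ∈ 𝓝ˢ (diagonal ℂˣ) := by
    refine IsOpen.mem_nhdsSet ?_ |>.2 fun p (hp : p.1 = p.2) ↦ ?_
    · exact isOpen_slitPlane.preimage (by fun_prop)
    · simp [S, hp]
  -- `h ∘ g` is locally constant and so close to `f` that `f / (h ∘ g)` stays in the slit plane.
  obtain ⟨n, g, h, hg, hgh⟩ := u.exists_finite_approximation_of_mem_nhds_diagonal hS
  refine ⟨⟨fun x ↦ log (h (g x)) + log (f x / h (g x)), ?_⟩, fun x ↦ ?_⟩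
  · have hhg : Continuous fun x ↦ h (g x) := continuous_of_discreteTopology.comp hg
    exact ((continuous_of_discreteTopology (f := fun i ↦ log (h i))).comp hg).add
      ((f.continuous.div (Units.continuous_val.comp hhg) fun x ↦ (h (g x)).ne_zero).clog
        fun x ↦ by simpa [S, u] using hgh x)
  · simp [exp_add, exp_log, hf x, mul_div_cancel₀]

theorem exists_intCast_eq (φ : C(X, ℂ)) (hφ : ∀ x, ∃ k : ℤ, φ x = k) :
    ∃ n : C(X, ℤ), ∀ x, (n x : ℂ) = φ x := by
  choose n hn using hφ
  have : Int.cast ∘ n = φ := funext fun x ↦ (hn x).symm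
  exact ⟨⟨n, isClosedEmbedding_intCast.continuous_iff.2 (this ▸ φ.continuous)⟩, fun x ↦ (hn x).symm⟩

end ContinuousMap

theorem Equiv.Perm.apply_zpow_apply_of_forall_apply_eq {X Y : Type*} {φ : X → Y}
    {σ : Equiv.Perm X} (h : ∀ x, φ (σ x) = φ x) (n : ℤ) (x : X) : φ ((σ ^ n) x) = φ x := by
  induction n using Int.induction_on generalizing x with
  | zero => rfl
  | succ n ih => rw [zpow_add_one, Perm.mul_apply, ih, h]
  | pred n ih =>
    rw [zpow_sub_one, Perm.mul_apply, ih, ← h (σ⁻¹ x), Perm.coe_inv, apply_symm_apply]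

namespace Homeomorph

variable {X : Type*} [TopologicalSpace X] (T : X ≃ₜ X)

theorem apply_eq_of_dense_orbit {Y : Type*} [TopologicalSpace Y] [T2Space Y] {x₀ : X}
    (hx₀ : Dense (range fun n : ℤ ↦ (T.toEquiv ^ n) x₀)) {φ : X → Y} (hφ : Continuous φ)
    (hφT : ∀ x, φ (T x) = φ x) (x : X) : φ x = φ x₀ := by
  refine congrFun (hφ.ext_on hx₀ continuous_const ?_) x
  rintro _ ⟨n, rfl⟩
  exact Equiv.Perm.apply_zpow_apply_of_forall_apply_eq hφT n x₀

theorem eigenfunction_ne_zero (hmin : ∀ x, Dense (range fun n : ℤ ↦ (T.toEquiv ^ n) x))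
    {F : C(X, ℂ)} (hF : F ≠ 0) {c : ℂ} (hc : ‖c‖ = 1) (hFT : ∀ x, F (T x) = c * F x) (x : X) :
    F x ≠ 0 := by
  obtain ⟨x₀, hx₀⟩ : ∃ x₀, F x₀ ≠ 0 := by simpa using DFunLike.ne_iff.mp hF
  have hnorm : ‖F x‖ = ‖F x₀‖ :=
    T.apply_eq_of_dense_orbit (hmin x₀) F.continuous.norm (by simp [hFT, hc]) x
  rw [← norm_ne_zero_iff, hnorm, norm_ne_zero_iff]
  exact hx₀

end Homeomorph

theorem Complex.exists_intCast_eq_of_exp_eq_exp_mul_exp {a z w : ℂ}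
    (h : exp w = exp (2 * π * I * a) * exp z) : ∃ k : ℤ, a + (z - w) / (2 * π * I) = k := by
  rw [← exp_add, exp_eq_exp_iff_exists_int] at h
  obtain ⟨k, hk⟩ := h
  refine ⟨-k, ?_⟩
  rw [hk]
  field_simp
  push_cast
  ring

theorem stmt1_general {X : Type*} [TopologicalSpace X] [CompactSpace X]
    [TopologicalSpace.MetrizableSpace X]
    [TotallyDisconnectedSpace X] [MeasurableSpace X] [BorelSpace X]
    (T : X ≃ₜ X)
    (hmin : ∀ x : X, Dense (Set.range fun n : ℤ => (T.toEquiv ^ n) x))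
    (α : ℝ)
    (hα : ∃ f : C(X, ℂ), f ≠ 0 ∧
      ∀ x : X, f (T x) = Complex.exp (2 * Real.pi * Complex.I * α) * f x)
    (μ : Measure X) (hμ : IsProbabilityMeasure μ) (hinv : Measure.map T μ = μ) :
    ∃ f : C(X, ℤ), ∫ x, (f x : ℝ) ∂μ = α := by
  obtain ⟨F, hF0, hFT⟩ := hα
  obtain ⟨H, hH⟩ := F.exists_exp_eq_of_forall_ne_zero
    (T.eigenfunction_ne_zero hmin hF0 (by simp [norm_exp]) hFT)
  obtain ⟨n, hn⟩ := ContinuousMap.exists_intCast_eq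
    ⟨fun x ↦ α + (H x - H (T x)) / (2 * π * I), by fun_prop⟩
    fun x ↦ exists_intCast_eq_of_exp_eq_exp_mul_exp (by rw [hH, hH, hFT])
  have hHT : ∫ x, H (T x) ∂μ = ∫ x, H x ∂μ := by
    rw [← T.measurableEmbedding.integral_map, hinv]
  have hint {φ : X → ℂ} (hφ : Continuous φ) : Integrable φ μ :=
    hφ.integrable_of_hasCompactSupport (.of_compactSpace φ)
  refine ⟨n, ofReal_injective ?_⟩
  calc ((∫ x, (n x : ℝ) ∂μ : ℝ) : ℂ) = ∫ x, (α + (H x - H (T x)) / (2 * π * I)) ∂μ := by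
        rw [← integral_complex_ofReal]
        simpa using integral_congr_ae (.of_forall hn)
    _ = α := by
        rw [integral_add (integrable_const _) ((hint (by fun_prop)).div_const _), integral_div,
          integral_sub (hint H.continuous) (hint (by fun_prop)), hHT]
        simp

/-- For every minimal Cantor system `(X,T)`, the group of additive continuous
eigenvalues `E(X,T)` is contained in the image subgroup `I(X,T)`: for every `α ∈ E(X,T)`
and every invariant probability measure `μ`, there is `f ∈ C(X,ℤ)` with `∫ f dμ = α`. -/
theorem stmt1 {X : Type*} [TopologicalSpace X] [CompactSpace X]
    [TopologicalSpace.MetrizableSpace X]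
    [TotallyDisconnectedSpace X] [Nonempty X] [MeasurableSpace X] [BorelSpace X]
    (hni : ∀ x : X, ¬IsOpen ({x} : Set X))
    (T : X ≃ₜ X)
    (hmin : ∀ x : X, Dense (Set.range fun n : ℤ => (T.toEquiv ^ n) x))
    (α : ℝ)
    (hα : ∃ f : C(X, ℂ), f ≠ 0 ∧
      ∀ x : X, f (T x) = Complex.exp (2 * Real.pi * Complex.I * α) * f x)
    (μ : Measure X) (hμ : IsProbabilityMeasure μ) (hinv : Measure.map T μ = μ) :
    ∃ f : C(X, ℤ), ∫ x, (f x : ℝ) ∂μ = α :=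
  stmt1_general T hmin α hα μ hμ hinv
end

section
/- Let (G,G⁺,u) be a simple dimension group with distinguished order unit, and let G̃ = {g ∈ G : τ(g) = τ'(g) for all traces τ, τ' of (G,G⁺,u)}. Then for every trace τ of (G,G⁺,u), the restriction of τ to G̃ is a surjective group homomorphism from G̃ onto the image subgroup I(G,G⁺,u), and its kernel equals the infinitesimal subgroup Inf(G) = {g ∈ G : τ'(g) = 0 for every trace τ'}. -/
/-- A simple dimension group with distinguished order unit, given by an abelian group `G`,
a positive cone `P` and an order unit `u`. -/
structure IsSimpleDimensionGroup (G : Type*) [AddCommGroup G] (P : Set G) (u : G) : Prop where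
  countable : Countable G
  pos_sub : ∀ g : G, ∃ a ∈ P, ∃ b ∈ P, g = a - b
  pos_antisymm : ∀ g : G, g ∈ P → -g ∈ P → g = 0
  pos_add : ∀ a ∈ P, ∀ b ∈ P, a + b ∈ P
  unperforated : ∀ (n : ℕ) (a : G), 1 ≤ n → n • a ∈ P → a ∈ P
  riesz : ∀ a₁ a₂ b₁ b₂ : G,
    b₁ - a₁ ∈ P → b₂ - a₁ ∈ P → b₁ - a₂ ∈ P → b₂ - a₂ ∈ P →
    ∃ c : G, c - a₁ ∈ P ∧ c - a₂ ∈ P ∧ b₁ - c ∈ P ∧ b₂ - c ∈ P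
  simple : ∀ g ∈ P, g ≠ 0 → ∀ a : G, ∃ n : ℕ, n • g - a ∈ P
  unit_pos : u ∈ P
  unit_order : ∀ a : G, ∃ n : ℕ, n • u - a ∈ P

/-- A trace on `(G, P, u)`: a nonnegative group homomorphism to `ℝ` normalized at `u`. -/
def IsTrace {G : Type*} [AddCommGroup G] (P : Set G) (u : G) (τ : G →+ ℝ) : Prop :=
  (∀ g ∈ P, 0 ≤ τ g) ∧ τ u = 1

/-! The traces form a σ-convex set: for `s ∈ (0,1)` and traces `eᵢ`, `∑ (1-s) sⁱ eᵢ` is again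
a trace. Since `G` is countable, there is a sequence `eᵢ` of traces that is pointwise dense among
all traces. If `x` lies in the range of every trace, then for each `s` some `g` satisfies
`∑ (1-s) sⁱ eᵢ(g) = x`; as `G` is countable and `(0,1)` is not, a single `g` does so for
uncountably many `s`. The power series `∑ (eᵢ(g) - x) sⁱ` then has uncountably many zeros in the
unit disc, so all its coefficients vanish: `eᵢ(g) = x` for all `i`, and by density `σ(g) = x` for
every trace `σ`. -/

open Filter Set

theorem AnalyticOnNhd.eqOn_zero_of_not_countable {𝕜 E : Type*} [NontriviallyNormedField 𝕜]
    [HereditarilyLindelofSpace 𝕜] [NormedAddCommGroup E] [NormedSpace 𝕜 E] {f : 𝕜 → E}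
    {U : Set 𝕜} (hf : AnalyticOnNhd 𝕜 f U) (hU : IsPreconnected U)
    (hZ : ¬ (f ⁻¹' {0} ∩ U).Countable) : EqOn f 0 U := by
  refine (hf.eqOn_zero_or_eventually_ne_zero_of_preconnected hU).resolve_right fun hne => hZ ?_
  exact (HereditarilyLindelofSpace.isLindelof _).countable_of_isDiscrete
    (isDiscrete_of_codiscreteWithin hne)

theorem eq_zero_of_hasSum_pow_eq_zero_of_not_countable {c : ℕ → ℝ} {C : ℝ}
    (hC : ∀ i, |c i| ≤ C) {Z : Set ℝ} (hZ : ¬ Z.Countable) (hZ_ball : Z ⊆ Metric.ball 0 1)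
    (hzero : ∀ s ∈ Z, HasSum (fun i => c i * s ^ i) 0) : c = 0 := by
  set p := FormalMultilinearSeries.ofScalars ℝ c
  have hball : Metric.eball (0 : ℝ) 1 = Metric.ball 0 1 := by
    simpa using Metric.eball_coe (x := (0 : ℝ)) (ε := 1)
  have hrad : 1 ≤ p.radius := by
    simpa using p.le_radius_of_bound C (r := 1) fun n => by
      simpa [p, FormalMultilinearSeries.ofScalars_norm] using hC n
  have hp : HasFPowerSeriesOnBall p.sum p 0 1 :=
    (p.hasFPowerSeriesOnBall (one_pos.trans_le hrad)).mono one_pos hrad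
  have hsum_zero : Z ⊆ p.sum ⁻¹' {0} ∩ Metric.eball 0 1 := by
    intro s hs
    have hs' : s ∈ Metric.eball (0 : ℝ) 1 := hball ▸ hZ_ball hs
    refine ⟨?_, hs'⟩
    have := hp.hasSum hs'
    simp only [p, FormalMultilinearSeries.ofScalars_apply_eq, smul_eq_mul, zero_add] at this
    exact this.unique (by simpa [mul_comm] using hzero s hs)
  have hEq : EqOn p.sum 0 (Metric.eball 0 1) :=
    hp.analyticOnNhd.eqOn_zero_of_not_countable (convex_eball 0 1).isPreconnected
      fun h => hZ (h.mono hsum_zero)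
  have hp0 : p = 0 := hp.hasFPowerSeriesAt.eq_zero_of_eventually <|
    eventually_of_mem (Metric.isOpen_eball.mem_nhds (Metric.mem_eball_self one_pos)) hEq
  exact (FormalMultilinearSeries.ofScalars_series_eq_zero ℝ).1 hp0

theorem hasSum_one_sub_mul_geometric {s : ℝ} (h₀ : 0 ≤ s) (h₁ : s < 1) :
    HasSum (fun i : ℕ => (1 - s) * s ^ i) 1 := by
  simpa [mul_inv_cancel₀ (sub_ne_zero.2 h₁.ne')] using
    (hasSum_geometric_of_lt_one h₀ h₁).mul_left (1 - s)

theorem eq_of_hasSum_one_sub_mul_geometric_of_not_countable {a : ℕ → ℝ} {C x : ℝ}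
    (ha : ∀ i, |a i| ≤ C) {Z : Set ℝ} (hZ : ¬ Z.Countable) (hZ_Ioo : Z ⊆ Ioo 0 1)
    (hsum : ∀ s ∈ Z, HasSum (fun i => (1 - s) * s ^ i * a i) x) (i : ℕ) : a i = x := by
  have hcoeff : (fun i => a i - x) = 0 := by
    refine eq_zero_of_hasSum_pow_eq_zero_of_not_countable (C := C + |x|)
      (fun i => (abs_sub _ _).trans (by linarith [ha i])) hZ
      (fun s hs => ?_) fun s hs => ?_
    · obtain ⟨h₀, h₁⟩ := hZ_Ioo hs
      rw [mem_ball_zero_iff, Real.norm_eq_abs, abs_lt]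
      constructor <;> linarith
    · obtain ⟨h₀, h₁⟩ := hZ_Ioo hs
      have hx := (hasSum_one_sub_mul_geometric h₀.le h₁).mul_right x
      have h := ((hsum s hs).sub hx).mul_left (1 - s)⁻¹
      rw [one_mul, sub_self, mul_zero] at h
      have : 1 - s ≠ 0 := sub_ne_zero.2 h₁.ne'
      exact h.congr_fun fun j => by field_simp
  exact sub_eq_zero.1 (congrFun hcoeff i)

section Traces

variable {G : Type*} [AddCommGroup G] {P : Set G} {u : G}

theorem exists_forall_isTrace_abs_le (hu : ∀ a : G, ∃ n : ℕ, n • u - a ∈ P) (g : G) :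
    ∃ C : ℝ, ∀ σ : G →+ ℝ, IsTrace P u σ → |σ g| ≤ C := by
  obtain ⟨n, hn⟩ := hu g
  obtain ⟨m, hm⟩ := hu (-g)
  refine ⟨n + m, fun σ hσ => ?_⟩
  have h₁ := hσ.1 _ hn
  have h₂ := hσ.1 _ hm
  simp only [map_sub, map_neg, map_nsmul, hσ.2, nsmul_eq_mul, mul_one] at h₁ h₂
  rw [abs_le]
  constructor <;> linarith [(Nat.cast_nonneg n : (0 : ℝ) ≤ n), (Nat.cast_nonneg m : (0 : ℝ) ≤ m)]

theorem exists_isTrace_hasSum (hu : ∀ a : G, ∃ n : ℕ, n • u - a ∈ P) {e : ℕ → G →+ ℝ}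
    (he : ∀ i, IsTrace P u (e i)) {w : ℕ → ℝ} (hw₀ : ∀ i, 0 ≤ w i) (hw : HasSum w 1) :
    ∃ σ : G →+ ℝ, IsTrace P u σ ∧ ∀ g, HasSum (fun i => w i * e i g) (σ g) := by
  have hs : ∀ g, Summable fun i => w i * e i g := fun g => by
    obtain ⟨C, hC⟩ := exists_forall_isTrace_abs_le hu g
    refine Summable.of_norm_bounded (hw.summable.mul_right C) fun i => ?_
    rw [norm_mul, Real.norm_of_nonneg (hw₀ i), Real.norm_eq_abs]
    exact mul_le_mul_of_nonneg_left (hC _ (he i)) (hw₀ i)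
  let σ : G →+ ℝ := AddMonoidHom.mk' (fun g => ∑' i, w i * e i g) fun a b => by
    simp only [map_add, mul_add]
    exact (hs a).tsum_add (hs b)
  refine ⟨σ, ⟨fun g hg => tsum_nonneg fun i => mul_nonneg (hw₀ i) ((he i).1 g hg), ?_⟩,
    fun g => (hs g).hasSum⟩
  show ∑' i, w i * e i u = 1
  simp only [(he _).2, mul_one]
  exact hw.tsum_eq

theorem exists_isTrace_seq_dense [Countable G] {τ : G →+ ℝ} (hτ : IsTrace P u τ) :
    ∃ e : ℕ → G →+ ℝ, (∀ i, IsTrace P u (e i)) ∧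
      ∀ σ : G →+ ℝ, IsTrace P u σ → ⇑σ ∈ closure (range fun i => ⇑(e i)) := by
  let T : Set (G → ℝ) := {f | ∃ σ : G →+ ℝ, IsTrace P u σ ∧ ⇑σ = f}
  have : Nonempty T := ⟨⟨τ, τ, hτ, rfl⟩⟩
  obtain ⟨v, hv⟩ := TopologicalSpace.exists_dense_seq T
  choose e he hev using fun i => (v i).2
  refine ⟨e, he, fun σ hσ => ?_⟩
  have := closure_subtype.1 (hv (⟨σ, σ, hσ, rfl⟩ : T))
  rwa [← range_comp, show Subtype.val ∘ v = fun i => ⇑(e i) from funext fun i => (hev i).symm]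
    at this

theorem exists_forall_isTrace_eq_of_forall_mem_range [Countable G]
    (hu : ∀ a : G, ∃ n : ℕ, n • u - a ∈ P) {τ : G →+ ℝ} (hτ : IsTrace P u τ) {x : ℝ}
    (hx : ∀ σ : G →+ ℝ, IsTrace P u σ → x ∈ range σ) :
    ∃ g : G, ∀ σ : G →+ ℝ, IsTrace P u σ → σ g = x := by
  obtain ⟨e, he, hdense⟩ := exists_isTrace_seq_dense hτ
  have hmix : ∀ s ∈ Ioo (0 : ℝ) 1, ∃ g : G, HasSum (fun i => (1 - s) * s ^ i * e i g) x := by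
    intro s ⟨h₀, h₁⟩
    obtain ⟨σ, hσ, hσsum⟩ := exists_isTrace_hasSum hu he
      (fun i => mul_nonneg (sub_nonneg.2 h₁.le) (pow_nonneg h₀.le i))
      (hasSum_one_sub_mul_geometric h₀.le h₁)
    obtain ⟨g, rfl⟩ := hx σ hσ
    exact ⟨g, hσsum g⟩
  choose! g hg using hmix
  obtain ⟨g₀, hg₀⟩ : ∃ g₀, ¬ (Ioo 0 1 ∩ g ⁻¹' {g₀}).Countable := by
    have hIoo : ¬ (Ioo (0 : ℝ) 1).Countable := fun h => by
      simpa using h.measure_zero MeasureTheory.volume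
    by_contra! h
    refine hIoo ((countable_iUnion h).mono fun s hs => ?_)
    exact mem_iUnion.2 ⟨g s, hs, rfl⟩
  obtain ⟨C, hC⟩ := exists_forall_isTrace_abs_le hu g₀
  have hseq : ∀ i, e i g₀ = x :=
    eq_of_hasSum_one_sub_mul_geometric_of_not_countable (fun i => hC _ (he i)) hg₀
      (fun s hs => hs.1) fun s ⟨hs, hgs⟩ => hgs ▸ hg s hs
  refine ⟨g₀, fun σ hσ => ?_⟩
  exact closure_minimal (range_subset_iff.2 hseq)
    (isClosed_eq (continuous_apply g₀) continuous_const) (hdense σ hσ)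

end Traces

/-- For a simple dimension group `(G,G⁺,u)` with
`G̃ = {g : τ g = τ' g for all traces τ, τ'}`, every trace `τ` restricts to a surjection from
`G̃` onto the image subgroup `I(G,G⁺,u) = ⋂_τ τ(G)`, with kernel the infinitesimal
subgroup `Inf(G)`. -/
theorem stmt4 {G : Type*} [AddCommGroup G] (P : Set G) (u : G)
    (hG : IsSimpleDimensionGroup G P u)
    (τ : G →+ ℝ) (hτ : IsTrace P u τ) :
    ((fun g : G => τ g) ''
        {g : G | ∀ σ σ' : G →+ ℝ, IsTrace P u σ → IsTrace P u σ' → σ g = σ' g}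
      = ⋂ σ ∈ {σ : G →+ ℝ | IsTrace P u σ}, Set.range σ) ∧
    ({g : G | (∀ σ σ' : G →+ ℝ, IsTrace P u σ → IsTrace P u σ' → σ g = σ' g) ∧ τ g = 0}
      = {g : G | ∀ σ : G →+ ℝ, IsTrace P u σ → σ g = 0}) := by
  have := hG.countable
  refine ⟨Subset.antisymm ?_ fun x hx => ?_, ?_⟩
  · rintro x ⟨g, hg, rfl⟩
    exact mem_iInter₂.2 fun σ hσ => ⟨g, hg σ τ hσ hτ⟩
  · obtain ⟨g, hg⟩ :=
      exists_forall_isTrace_eq_of_forall_mem_range hG.unit_order hτ (mem_iInter₂.1 hx)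
    exact ⟨g, fun σ σ' hσ hσ' => (hg σ hσ).trans (hg σ' hσ').symm, hg τ hτ⟩
  · ext g
    exact ⟨fun ⟨h, h₀⟩ σ hσ => (h σ τ hσ hτ).trans h₀,
      fun h => ⟨fun σ σ' hσ hσ' => (h σ hσ).trans (h σ' hσ').symm, h τ hτ⟩⟩
end

section
/- Let X and Y be compact metric spaces, T : X → X and S : Y → Y homeomorphisms, and π : X → Y a continuous surjection with π∘T = S∘π. Assume (Y,S) is minimal (every S-orbit is dense in Y) and that π is almost 1-1, i.e., there exists y ∈ Y whose preimage π⁻¹({y}) is a singleton. Then π is a proximal extension: for all x', x'' ∈ X with π(x') = π(x''), one has inf_{n ∈ ℕ} d(Tⁿx', Tⁿx'') = 0, where d is the metric on X. -/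
open Filter Topology

/-- Forward orbits are dense for a minimal homeomorphism of a compact space. -/
lemma fwd_dense {Y : Type*} [TopologicalSpace Y] [CompactSpace Y] (S : Y ≃ₜ Y)
    (hmin : ∀ y : Y, Dense (Set.range fun n : ℤ => (S.toEquiv ^ n) y)) (y : Y) :
    Dense (Set.range fun n : ℕ => (⇑S)^[n] y) := by
  rw [← dense_closure]
  set u : ℕ → Y := fun n => (⇑S)^[n] y with hu
  obtain ⟨z, hz⟩ := exists_clusterPt_of_compactSpace (Filter.map u Filter.atTop)
  have hz' : MapClusterPt z Filter.atTop u := hz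
  have key : ∀ k : ℤ, (S.toEquiv ^ k) z ∈ closure (Set.range u) := by
    intro k
    induction k using Int.rec with
    | ofNat m =>
      have hcont : Continuous fun w => (⇑S)^[m] w := S.continuous.iterate m
      have h2 : MapClusterPt ((⇑S)^[m] z) Filter.atTop ((⇑S)^[m] ∘ u) :=
        hz'.continuousAt_comp hcont.continuousAt
      have hmem : ∀ n : ℕ, ((⇑S)^[m] ∘ u) n ∈ Set.range u := by
        intro n
        refine ⟨m + n, ?_⟩
        simp only [hu, Function.comp_apply, Function.iterate_add_apply]
      have : ClusterPt ((⇑S)^[m] z) (Filter.map ((⇑S)^[m] ∘ u) Filter.atTop) := h2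
      have hle : Filter.map ((⇑S)^[m] ∘ u) Filter.atTop ≤ Filter.principal (Set.range u) := by
        rw [Filter.le_principal_iff, Filter.mem_map]
        exact Filter.Eventually.of_forall hmem
      have hmem2 := this.mono hle
      rw [← mem_closure_iff_clusterPt] at hmem2
      have heq : (S.toEquiv ^ (Int.ofNat m)) z = (⇑S)^[m] z := by
        simp only [Int.ofNat_eq_coe, zpow_natCast, Equiv.Perm.coe_pow]
        rfl
      rw [heq]; exact hmem2
    | negSucc m =>
      set j := m + 1 with hj
      have hcont : Continuous fun w => (⇑S.symm)^[j] w := S.symm.continuous.iterate j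
      have h2 : MapClusterPt ((⇑S.symm)^[j] z) Filter.atTop ((⇑S.symm)^[j] ∘ u) :=
        hz'.continuousAt_comp hcont.continuousAt
      have hmem : ∀ᶠ n : ℕ in Filter.atTop, ((⇑S.symm)^[j] ∘ u) n ∈ Set.range u := by
        filter_upwards [Filter.eventually_ge_atTop j] with n hn
        refine ⟨n - j, ?_⟩
        have hli : Function.LeftInverse (⇑S.symm)^[j] (⇑S)^[j] :=
          (Function.LeftInverse.iterate S.symm_apply_apply j)
        have : u n = (⇑S)^[j] (u (n - j)) := by
          simp only [hu]
          rw [← Function.iterate_add_apply]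
          congr 1
          omega
        simp only [Function.comp_apply, this, hli _]
      have : ClusterPt ((⇑S.symm)^[j] z) (Filter.map ((⇑S.symm)^[j] ∘ u) Filter.atTop) := h2
      have hle : Filter.map ((⇑S.symm)^[j] ∘ u) Filter.atTop ≤ Filter.principal (Set.range u) := by
        rw [Filter.le_principal_iff, Filter.mem_map]
        exact hmem
      have hmem2 := this.mono hle
      rw [← mem_closure_iff_clusterPt] at hmem2
      have heq : (S.toEquiv ^ (Int.negSucc m)) z = (⇑S.symm)^[j] z := by
        rw [zpow_negSucc, ← inv_pow, ← hj]
        have : ⇑(S.toEquiv⁻¹ ^ j) = (⇑S.symm)^[j] := by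
          rw [Equiv.Perm.coe_pow]; rfl
        rw [this]
      rw [heq]; exact hmem2
  have hsub : Set.range (fun k : ℤ => (S.toEquiv ^ k) z) ⊆ closure (Set.range u) := by
    rintro _ ⟨k, rfl⟩
    exact key k
  exact (hmin z).mono hsub

/-- An almost 1-1 extension `π : (X,T) → (Y,S)` of compact systems with `(Y,S)`
minimal is a proximal extension: points with the same image under `π` have iterates that
come arbitrarily close, i.e. `inf_{n ∈ ℕ} d(Tⁿx', Tⁿx'') = 0`. -/
theorem stmt5 {X Y : Type*} [MetricSpace X] [MetricSpace Y] [CompactSpace X] [CompactSpace Y]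
    (T : X ≃ₜ X) (S : Y ≃ₜ Y)
    (π : X → Y) (hπc : Continuous π) (hπs : Function.Surjective π)
    (hcomm : ∀ x : X, π (T x) = S (π x))
    (hmin : ∀ y : Y, Dense (Set.range fun n : ℤ => (S.toEquiv ^ n) y))
    (h11 : ∃ y : Y, ∃! x : X, π x = y)
    (x' x'' : X) (h : π x' = π x'') :
    (⨅ n : ℕ, dist ((⇑T)^[n] x') ((⇑T)^[n] x'')) = 0 := by
  obtain ⟨y₀, x₀, hx₀, huniq⟩ := h11
  have hbdd : BddBelow (Set.range fun n : ℕ => dist ((⇑T)^[n] x') ((⇑T)^[n] x'')) := by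
    refine ⟨0, ?_⟩
    rintro _ ⟨n, rfl⟩
    exact dist_nonneg
  have hnonneg : (0 : ℝ) ≤ ⨅ n : ℕ, dist ((⇑T)^[n] x') ((⇑T)^[n] x'') :=
    le_ciInf fun n => dist_nonneg
  have hsemi : Function.Semiconj π (⇑T) (⇑S) := hcomm
  refine le_antisymm ?_ hnonneg
  refine le_of_forall_pos_le_add ?_
  intro ε hε
  -- find a neighborhood V of y₀ with π⁻¹ V ⊆ ball x₀ (ε/2)
  have hU : IsOpen (Metric.ball x₀ (ε / 2)) := Metric.isOpen_ball
  set C : Set X := (Metric.ball x₀ (ε / 2))ᶜ with hC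
  have hCcomp : IsCompact C := (hU.isClosed_compl).isCompact
  have hπC : IsClosed (π '' C) := (hCcomp.image hπc).isClosed
  have hy₀ : y₀ ∉ π '' C := by
    rintro ⟨x, hxC, hxy⟩
    apply hxC
    rw [huniq x hxy]
    exact Metric.mem_ball_self (by linarith)
  set V : Set Y := (π '' C)ᶜ with hV
  have hVopen : IsOpen V := hπC.isOpen_compl
  have hy₀V : y₀ ∈ V := hy₀
  have hpre : ∀ x : X, π x ∈ V → dist x x₀ < ε / 2 := by
    intro x hx
    by_contra hcon
    exact hx ⟨x, fun hb => hcon (by simpa [dist_comm] using hb), rfl⟩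
  -- density of forward orbit of π x'
  have hdense := fwd_dense S hmin (π x')
  obtain ⟨_, ⟨n, rfl⟩, hwV⟩ := hdense.exists_mem_open hVopen ⟨y₀, hy₀V⟩
  have hπT : ∀ x : X, π ((⇑T)^[n] x) = (⇑S)^[n] (π x) := fun x =>
    (hsemi.iterate_right n) x
  have h1 : dist ((⇑T)^[n] x') x₀ < ε / 2 := hpre _ (by rw [hπT]; exact hwV)
  have h2 : dist ((⇑T)^[n] x'') x₀ < ε / 2 := hpre _ (by rw [hπT, ← h]; exact hwV)
  have hd : dist ((⇑T)^[n] x') ((⇑T)^[n] x'') < ε := by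
    calc dist ((⇑T)^[n] x') ((⇑T)^[n] x'')
        ≤ dist ((⇑T)^[n] x') x₀ + dist x₀ ((⇑T)^[n] x'') := dist_triangle _ _ _
      _ < ε / 2 + ε / 2 := by rw [dist_comm x₀]; linarith
      _ = ε := by ring
  calc (⨅ n : ℕ, dist ((⇑T)^[n] x') ((⇑T)^[n] x'')) ≤ dist ((⇑T)^[n] x') ((⇑T)^[n] x'') :=
        ciInf_le hbdd n
    _ ≤ 0 + ε := by linarith
end

section
/- Let (X,T) and (Y,S) be minimal Cantor systems which are strongly orbit equivalent: there exist a homeomorphism φ : X → Y and functions n : X → ℤ, m : X → ℤ, each continuous except at most at one point of X (with ℤ given the discrete topology), such that φ(Tx) = S^{n(x)}(φ(x)) and φ(T^{m(x)}x) = S(φ(x)) for all x ∈ X. Then (X,T) and (Y,S) have the same rational additive continuous eigenvalues: E(X,T) ∩ ℚ = E(Y,S) ∩ ℚ. -/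
/-!
If `a ^ b = 1`, a continuous `a`-eigenfunction `f` of a minimal system has `T`-invariant, hence
constant, `f ^ b`, so `f` is nowhere zero and takes finitely many values: it is a locally constant
map into `ℂˣ`. Such eigenfunctions transfer from `(X, T)` to `(Y, S)`. The map `R = φ T φ⁻¹` acts
as `S ^ h` with `h` continuous off one point `y₀`, and for locally constant `τ` the ratio
`τ ∘ R⁻¹ / τ` is a coboundary `w ∘ S / w` with `w` locally constant: after dividing `τ` by the
constant `τ y₀`, its support is a compact set avoiding `y₀`, which splits into finitely many
clopen pieces where `R = S ^ c`, and on each piece `τ ∘ S⁻ᶜ / τ` telescopes. If `τ ∘ R = a * τ`,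
then `w⁻¹` is an `a`-eigenfunction of `S`.
-/

open Set Function

theorem Set.mulIndicator_comp_symm_eq_of_eqOn {α M : Type*} [One M] {R P : α ≃ α} {A : Set α}
    (h : EqOn R P A) (τ : α → M) : A.mulIndicator τ ∘ R.symm = A.mulIndicator τ ∘ P.symm := by
  ext y
  by_cases hR : R.symm y ∈ A
  · have : P.symm y = R.symm y := by rw [P.symm_apply_eq, ← h hR, R.apply_symm_apply]
    simp [this]
  by_cases hP : P.symm y ∈ A
  · have : R.symm y = P.symm y := by rw [R.symm_apply_eq, h hP, P.apply_symm_apply]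
    exact absurd (this ▸ hP) hR
  simp [mulIndicator_of_notMem hR, mulIndicator_of_notMem hP]

section

variable {X Y Z M G : Type*} [TopologicalSpace X] [TopologicalSpace Y] [TopologicalSpace Z]
  [CommGroup G]

def Homeomorph.toPermHom : (Y ≃ₜ Y) →* Equiv.Perm Y where
  toFun := Homeomorph.toEquiv
  map_one' := rfl
  map_mul' _ _ := rfl

theorem Homeomorph.continuous_toEquiv_zpow (S : Y ≃ₜ Y) (k : ℤ) :
    Continuous (S.toEquiv ^ k) := by
  have : S.toEquiv ^ k = (S ^ k).toEquiv := (map_zpow Homeomorph.toPermHom S k).symm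
  rw [this]
  exact (S ^ k).continuous

theorem Equiv.Perm.apply_eq_of_invariant_of_dense_orbit [T2Space Z]
    {T : Equiv.Perm X} (hT : ∀ x, Dense (range fun k : ℤ => (T ^ k) x)) {g : X → Z}
    (hg : Continuous g) (hgT : ∀ x, g (T x) = g x) (x x' : X) : g x' = g x := by
  have hzpow : ∀ k : ℤ, ∀ x, g ((T ^ k) x) = g x := by
    intro k
    induction k using Int.induction_on with
    | zero => simp
    | succ k ih => intro x; rw [zpow_add_one, Equiv.Perm.mul_apply, ih, hgT]
    | pred k ih =>
      intro x
      rw [zpow_sub_one, Equiv.Perm.mul_apply, ih, ← hgT, Equiv.Perm.inv_def, T.apply_symm_apply]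
  have horbit : range (fun k : ℤ => (T ^ k) x) ⊆ {y | g y = g x} :=
    range_subset_iff.2 fun k => hzpow k x
  have hclosure := closure_minimal horbit (isClosed_eq hg continuous_const)
  rw [(hT x).closure_eq] at hclosure
  exact hclosure (mem_univ x')

theorem Continuous.isLocallyConstant_of_finite_range [T1Space Z] {f : X → Z}
    (hf : Continuous f) (hfin : (range f).Finite) : IsLocallyConstant f := by
  have : Finite (range f) := hfin.to_subtype
  exact ((IsLocallyConstant.iff_continuous _).2 hf.rangeFactorization).comp Subtype.val

def locallyConstantCoboundaries (S : Y → Y) (G : Type*) [CommGroup G] : Subgroup (Y → G) where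
  carrier := {u | ∃ w : Y → G, IsLocallyConstant w ∧ w ∘ S / w = u}
  mul_mem' := by
    rintro _ _ ⟨w, hw, rfl⟩ ⟨w', hw', rfl⟩
    exact ⟨w * w', hw.mul hw', by ext; simp [mul_div_mul_comm]⟩
  one_mem' := ⟨1, .one, div_self' _⟩
  inv_mem' := by
    rintro _ ⟨w, hw, rfl⟩
    exact ⟨w⁻¹, hw.inv, by ext; simp [div_eq_mul_inv, mul_comm]⟩

theorem IsLocallyConstant.comp_div_mem_locallyConstantCoboundaries (S : Y → Y) {w : Y → G}
    (hw : IsLocallyConstant w) : w ∘ S / w ∈ locallyConstantCoboundaries S G :=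
  ⟨w, hw, rfl⟩

theorem IsLocallyConstant.comp_zpow_div_mem_locallyConstantCoboundaries (S : Y ≃ₜ Y) {τ : Y → G}
    (hτ : IsLocallyConstant τ) (k : ℤ) :
    τ ∘ ⇑(S.toEquiv ^ k) / τ ∈ locallyConstantCoboundaries S G := by
  induction k using Int.induction_on with
  | zero => simp
  | succ k ih =>
    have hw := (hτ.comp_continuous (S.continuous_toEquiv_zpow k)
      ).comp_div_mem_locallyConstantCoboundaries S
    convert mul_mem hw ih using 1
    ext y; simp [zpow_add_one]
  | pred k ih =>
    have hw := (hτ.comp_continuous (S.continuous_toEquiv_zpow (-k - 1))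
      ).comp_div_mem_locallyConstantCoboundaries S
    convert mul_mem (inv_mem hw) ih using 1
    ext y; simp [zpow_sub_one]

theorem IsLocallyConstant.mulIndicator_preimage_singleton [One M] {τ : Y → M}
    (hτ : IsLocallyConstant τ) {h : Y → ℤ} (hh : ∀ y ∈ mulSupport τ, ContinuousAt h y) (c : ℤ) :
    IsLocallyConstant ((h ⁻¹' {c}).mulIndicator τ) := by
  classical
  rw [IsLocallyConstant.iff_eventually_eq]
  intro y
  by_cases hy : y ∈ mulSupport τ
  · have hhy : ∀ᶠ z in nhds y, h z = h y := hh y hy ((isOpen_discrete {h y}).mem_nhds rfl)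
    filter_upwards [hhy, hτ.eventually_eq y] with z hz1 hz2
    simp [mulIndicator_apply, hz1, hz2]
  · filter_upwards [hτ.eventually_eq y] with z hz
    rw [notMem_mulSupport] at hy
    simp [mulIndicator_apply, hz, hy]

theorem IsLocallyConstant.comp_symm_div_mem_of_continuousAt [CompactSpace Y] (S : Y ≃ₜ Y)
    {R : Y ≃ Y} {h : Y → ℤ} (hR : ∀ y, R y = (S.toEquiv ^ h y) y) {τ : Y → G}
    (hτ : IsLocallyConstant τ) (hh : ∀ y ∈ mulSupport τ, ContinuousAt h y) :
    τ ∘ R.symm / τ ∈ locallyConstantCoboundaries S G := by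
  classical
  have hK : IsCompact (mulSupport τ) := (hτ.isClopen_fiber 1).isOpen.isClosed_compl.isCompact
  have hC : (h '' mulSupport τ).Finite :=
    (hK.image_of_continuousOn fun y hy => (hh y hy).continuousWithinAt).finite_of_discrete
  set C := hC.toFinset
  set τc : ℤ → Y → G := fun c => (h ⁻¹' {c}).mulIndicator τ
  have hsplit : τ = ∏ c ∈ C, τc c := by
    ext y
    rw [Finset.prod_apply]
    simp only [τc, mulIndicator_apply, mem_preimage, mem_singleton_iff, Finset.prod_ite_eq]
    split_ifs with hy
    · rfl
    · by_contra hτy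
      exact hy (by simpa [C] using mem_image_of_mem h (show y ∈ mulSupport τ from hτy))
  have hpiece : ∀ c, τc c ∘ R.symm / τc c ∈ locallyConstantCoboundaries S G := by
    intro c
    have hRc : EqOn R ⇑(S.toEquiv ^ c) (h ⁻¹' {c}) := fun y hy => by
      rw [hR y, show h y = c from hy]
    rw [mulIndicator_comp_symm_eq_of_eqOn hRc, ← Equiv.Perm.inv_def, ← zpow_neg]
    exact (hτ.mulIndicator_preimage_singleton hh c
      ).comp_zpow_div_mem_locallyConstantCoboundaries S (-c)
  rw [hsplit]
  convert Subgroup.prod_mem _ fun c (_ : c ∈ C) => hpiece c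
  ext y
  simp [Finset.prod_apply, Finset.prod_div_distrib]

theorem IsLocallyConstant.comp_symm_div_mem [CompactSpace Y] (S : Y ≃ₜ Y)
    {R : Y ≃ Y} {h : Y → ℤ} (hR : ∀ y, R y = (S.toEquiv ^ h y) y) {y₀ : Y}
    (hh : ∀ y, y ≠ y₀ → ContinuousAt h y) {τ : Y → G} (hτ : IsLocallyConstant τ) :
    τ ∘ R.symm / τ ∈ locallyConstantCoboundaries S G := by
  set τ' := τ / fun _ => τ y₀
  have hτ' : τ' ∘ R.symm / τ' = τ ∘ R.symm / τ := by
    ext y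
    simp [τ', div_div_div_cancel_right]
  rw [← hτ']
  refine (hτ.div (.const _)).comp_symm_div_mem_of_continuousAt S hR fun y hy => hh y ?_
  rintro rfl
  simp at hy

theorem IsLocallyConstant.exists_eigenfunction_of_zpow_cocycle [CompactSpace Y] (S : Y ≃ₜ Y)
    {R : Y ≃ Y} {h : Y → ℤ} (hR : ∀ y, R y = (S.toEquiv ^ h y) y) {y₀ : Y}
    (hh : ∀ y, y ≠ y₀ → ContinuousAt h y) {a : G} {τ : Y → G} (hτ : IsLocallyConstant τ)
    (hτR : ∀ y, τ (R y) = a * τ y) :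
    ∃ σ : Y → G, IsLocallyConstant σ ∧ ∀ y, σ (S y) = a * σ y := by
  obtain ⟨w, hw, hwS⟩ := hτ.comp_symm_div_mem S hR hh
  refine ⟨w⁻¹, hw.inv, fun y => ?_⟩
  have hwy : w (S y) / w y = τ (R.symm y) / τ y := congrFun hwS y
  have hτy : τ y = a * τ (R.symm y) := by simpa using hτR (R.symm y)
  rw [hτy, div_mul_cancel_right, div_eq_iff_eq_mul] at hwy
  simp [hwy, mul_comm]

theorem Homeomorph.continuousAt_comp_symm (φ : X ≃ₜ Y) {n : X → Z} {p : X}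
    (hn : ∀ x, x ≠ p → ContinuousAt n x) : ∀ y, y ≠ φ p → ContinuousAt (n ∘ φ.symm) y := by
  intro y hy
  refine (hn _ fun hp => hy ?_).comp φ.symm.continuous.continuousAt
  rw [← hp, φ.apply_symm_apply]

theorem IsLocallyConstant.exists_eigenfunction_of_orbit_cocycle [CompactSpace Y] {T : X ≃ₜ X}
    {S : Y ≃ₜ Y} (φ : X ≃ₜ Y) {n : X → ℤ} {p : X} (hn : ∀ x, x ≠ p → ContinuousAt n x)
    (hφ : ∀ x, φ (T x) = (S.toEquiv ^ n x) (φ x)) {a : G} {u : X → G}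
    (hu : IsLocallyConstant u) (huT : ∀ x, u (T x) = a * u x) :
    ∃ v : Y → G, IsLocallyConstant v ∧ ∀ y, v (S y) = a * v y := by
  refine (hu.comp_continuous φ.symm.continuous).exists_eigenfunction_of_zpow_cocycle S
    (R := (φ.symm.trans (T.trans φ)).toEquiv) (h := n ∘ φ.symm) (y₀ := φ p)
    (fun y => by simpa using hφ (φ.symm y)) (φ.continuousAt_comp_symm hn)
    (fun y => by simpa using huT (φ.symm y))

theorem exists_continuous_eigenfunction_iff [Nonempty X] {T : X ≃ₜ X}
    (hT : ∀ x, Dense (range fun k : ℤ => (T.toEquiv ^ k) x)) {a : ℂˣ} (ha : IsOfFinOrder a) :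
    (∃ f : C(X, ℂ), f ≠ 0 ∧ ∀ x, f (T x) = a * f x) ↔
      ∃ u : X → ℂˣ, IsLocallyConstant u ∧ ∀ x, u (T x) = a * u x := by
  constructor
  · rintro ⟨f, hf0, hf⟩
    obtain ⟨b, hb, hab⟩ := isOfFinOrder_iff_pow_eq_one.1 ha
    have hpow : ∀ x x₀, f x ^ b = f x₀ ^ b := fun x x₀ =>
      Equiv.Perm.apply_eq_of_invariant_of_dense_orbit (g := fun x => f x ^ b) hT
        (f.continuous.pow b) (fun x => by simp [hf, mul_pow, ← Units.val_pow_eq_pow_val, hab]) x₀ x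
    obtain ⟨x₀, hx₀⟩ : ∃ x₀, f x₀ ≠ 0 := by
      by_contra! hzero
      exact hf0 (ContinuousMap.ext hzero)
    have hne : ∀ x, f x ≠ 0 := fun x hx =>
      hx₀ ((pow_eq_zero_iff hb.ne').1 (by rw [hpow x₀ x, hx, zero_pow hb.ne']))
    have hfin : (range f).Finite := by
      refine (Polynomial.nthRoots b (f x₀ ^ b)).toFinset.finite_toSet.subset ?_
      rintro _ ⟨x, rfl⟩
      simp [Polynomial.mem_nthRoots hb, hpow x x₀]
    refine ⟨fun x => Units.mk0 (f x) (hne x), ?_, fun x => Units.ext (by simp [hf])⟩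
    exact IsLocallyConstant.desc _ Units.val (f.continuous.isLocallyConstant_of_finite_range hfin)
      Units.val_injective
  · rintro ⟨u, hu, huT⟩
    refine ⟨⟨fun x => u x, (hu.comp Units.val).continuous⟩, fun h0 => ?_, fun x => by simp [huT]⟩
    exact (u (Classical.arbitrary X)).ne_zero (DFunLike.congr_fun h0 _)

end

theorem stmt6_general {X Y : Type*} [TopologicalSpace X] [CompactSpace X]
    [Nonempty X]
    [TopologicalSpace Y] [CompactSpace Y]
    [Nonempty Y]
    (T : X ≃ₜ X) (S : Y ≃ₜ Y)
    (hminT : ∀ x : X, Dense (Set.range fun k : ℤ => (T.toEquiv ^ k) x))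
    (hminS : ∀ y : Y, Dense (Set.range fun k : ℤ => (S.toEquiv ^ k) y))
    (φ : X ≃ₜ Y) (n m : X → ℤ)
    (pn : X) (hn : ∀ x : X, x ≠ pn → ContinuousAt n x)
    (pm : X) (hm : ∀ x : X, x ≠ pm → ContinuousAt m x)
    (h1 : ∀ x : X, φ (T x) = (S.toEquiv ^ n x) (φ x))
    (h2 : ∀ x : X, φ ((T.toEquiv ^ m x) x) = S (φ x)) :
    ∀ q : ℚ,
      (∃ f : C(X, ℂ), f ≠ 0 ∧
        ∀ x : X, f (T x) = Complex.exp (2 * Real.pi * Complex.I * (q : ℝ)) * f x) ↔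
      (∃ g : C(Y, ℂ), g ≠ 0 ∧
        ∀ y : Y, g (S y) = Complex.exp (2 * Real.pi * Complex.I * (q : ℝ)) * g y) := by
  intro q
  obtain ⟨a, ha⟩ := (Complex.isPrimitiveRoot_exp_rat q).isUnit q.den_nz
  have ha_fin : IsOfFinOrder a :=
    (IsPrimitiveRoot.coe_units_iff.1 (ha ▸ Complex.isPrimitiveRoot_exp_rat q)).isOfFinOrder q.den_nz
  rw [Complex.ofReal_ratCast, ← ha, exists_continuous_eigenfunction_iff hminT ha_fin,
    exists_continuous_eigenfunction_iff hminS ha_fin]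
  constructor
  · rintro ⟨u, hu, huT⟩
    exact hu.exists_eigenfunction_of_orbit_cocycle φ hn h1 huT
  · rintro ⟨v, hv, hvS⟩
    refine hv.exists_eigenfunction_of_orbit_cocycle φ.symm (φ.continuousAt_comp_symm hm)
      (fun y => ?_) hvS
    rw [φ.symm_apply_eq, Function.comp_apply, h2, φ.apply_symm_apply]

/-- Strongly orbit equivalent minimal Cantor systems have the same rational
additive continuous eigenvalues: if `φ : X → Y` is a homeomorphism sending orbits to orbits,
with orbit cocycles `n, m : X → ℤ` each continuous except at most at one point, then
`E(X,T) ∩ ℚ = E(Y,S) ∩ ℚ`. -/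
theorem stmt6 {X Y : Type*} [TopologicalSpace X] [CompactSpace X]
    [TopologicalSpace.MetrizableSpace X] [TotallyDisconnectedSpace X] [Nonempty X]
    [TopologicalSpace Y] [CompactSpace Y]
    [TopologicalSpace.MetrizableSpace Y] [TotallyDisconnectedSpace Y] [Nonempty Y]
    (hniX : ∀ x : X, ¬IsOpen ({x} : Set X))
    (hniY : ∀ y : Y, ¬IsOpen ({y} : Set Y))
    (T : X ≃ₜ X) (S : Y ≃ₜ Y)
    (hminT : ∀ x : X, Dense (Set.range fun k : ℤ => (T.toEquiv ^ k) x))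
    (hminS : ∀ y : Y, Dense (Set.range fun k : ℤ => (S.toEquiv ^ k) y))
    (φ : X ≃ₜ Y) (n m : X → ℤ)
    (pn : X) (hn : ∀ x : X, x ≠ pn → ContinuousAt n x)
    (pm : X) (hm : ∀ x : X, x ≠ pm → ContinuousAt m x)
    (h1 : ∀ x : X, φ (T x) = (S.toEquiv ^ n x) (φ x))
    (h2 : ∀ x : X, φ ((T.toEquiv ^ m x) x) = S (φ x)) :
    ∀ q : ℚ,
      (∃ f : C(X, ℂ), f ≠ 0 ∧
        ∀ x : X, f (T x) = Complex.exp (2 * Real.pi * Complex.I * (q : ℝ)) * f x) ↔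
      (∃ g : C(Y, ℂ), g ≠ 0 ∧
        ∀ y : Y, g (S y) = Complex.exp (2 * Real.pi * Complex.I * (q : ℝ)) * g y) :=
  stmt6_general T S hminT hminS φ n m pn hn pm hm h1 h2
end

section
/- Let (X,T) be a minimal Cantor system with a nested sequence of clopen Kakutani–Rohlin partitions satisfying (KR1)–(KR6). Let α ∈ ℝ, let m > 1 be an integer, and let v_m ∈ ℝ^{C_m} and w_m ∈ ℤ^{C_m} satisfy α·P_m H_1 = v_m + w_m and Σ_{n > m} ‖P_{n,m} v_m‖_∞ < ∞. Then for every μ ∈ M(X,T) and every integer n ≥ m: α = ⟨μ_m, w_m⟩ and ⟨μ_n, P_{n,m} v_m⟩ = 0, where μ_n = (μ(B_n(k)))_{k=1}^{C_n} is the measure vector. -/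
/-!
Invariance of `μ` makes the measure vectors compatible with the incidence matrices,
`μ_n = μ_{n+1} M_{n+1}`, so the pairing `⟨μ_n, P_{n,m} v_m⟩` does not depend on `n`. As `μ_n` is
nonnegative with total mass at most one, the pairing is bounded by `‖P_{n,m} v_m‖_∞`, which tends
to zero by summability; hence it vanishes. Pairing `α H_m = v_m + w_m` with `μ_m` and using
`⟨μ_m, H_m⟩ = 1` (the towers of level `m` tile `X`) then gives `α = ⟨μ_m, w_m⟩`.
-/

open MeasureTheory

/-- A nested sequence of clopen Kakutani–Rohlin partitions of a Cantor system `(X,T)`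
satisfying (KR1)–(KR6), with the conventions `C 0 = 1`, `h 0 = 1`, `B 0 = X` and
`h 1 (k) = 1`.  The atoms of the `n`-th partition are the sets `T^j (B n k)` for
`0 ≤ j < h n k`. -/
structure KRSystem (X : Type*) [TopologicalSpace X] (T : X ≃ₜ X) where
  /-- number of towers at level `n` -/
  C : ℕ → ℕ
  C_pos : ∀ n, 0 < C n
  /-- bases of the towers -/
  B : (n : ℕ) → Fin (C n) → Set X
  /-- heights of the towers -/
  h : (n : ℕ) → Fin (C n) → ℕ
  h_pos : ∀ n k, 0 < h n k
  clopen : ∀ n k, IsClopen (B n k)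
  C_zero : C 0 = 1
  h_zero : ∀ k, h 0 k = 1
  B_zero : ∀ k, B 0 k = Set.univ
  h_one : ∀ k, h 1 k = 1
  /-- the atoms `T^j (B n k)`, `0 ≤ j < h n k`, are pairwise disjoint -/
  disj : ∀ n, ∀ k k' : Fin (C n), ∀ j j' : ℕ, j < h n k → j' < h n k' →
    (k ≠ k' ∨ j ≠ j') → Disjoint ((⇑T)^[j] '' B n k) ((⇑T)^[j'] '' B n k')
  /-- the atoms cover `X` -/
  cover : ∀ n, (⋃ (k : Fin (C n)) (j : ℕ) (_ : j < h n k), (⇑T)^[j] '' B n k) = Set.univ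
  /-- `⋃ k, T^{h n k} (B n k) = ⋃ k, B n k` -/
  ret : ∀ n, (⋃ k : Fin (C n), (⇑T)^[h n k] '' B n k) = ⋃ k : Fin (C n), B n k
  /-- (KR1) -/
  kr1 : ∀ n, (⋃ k : Fin (C (n + 1)), B (n + 1) k) ⊆ ⋃ k : Fin (C n), B n k
  /-- (KR2) the `(n+1)`-st partition refines the `n`-th one -/
  kr2 : ∀ n, ∀ l : Fin (C (n + 1)), ∀ j : ℕ, j < h (n + 1) l →
    ∃ k : Fin (C n), ∃ i : ℕ, i < h n k ∧ (⇑T)^[j] '' B (n + 1) l ⊆ (⇑T)^[i] '' B n k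
  /-- (KR3) the intersection of the bases is a single point -/
  kr3 : ∃ x : X, (⋂ n, ⋃ k : Fin (C n), B n k) = {x}
  /-- (KR4) the atoms span the topology of `X` -/
  kr4 : ∀ U : Set X, IsOpen U → ∀ x ∈ U, ∃ n, ∃ k : Fin (C n), ∃ j : ℕ,
    j < h n k ∧ x ∈ (⇑T)^[j] '' B n k ∧ (⇑T)^[j] '' B n k ⊆ U
  /-- (KR5) -/
  kr5 : ∀ n, ∀ k : Fin (C n), ∀ l : Fin (C (n + 1)), ∃ j : ℕ,
    j < h (n + 1) l ∧ (⇑T)^[j] '' B (n + 1) l ⊆ B n k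
  /-- (KR6) -/
  kr6 : ∀ n, (⋃ k : Fin (C (n + 1)), B (n + 1) k) ⊆ B n ⟨0, C_pos n⟩

variable {X : Type*} [TopologicalSpace X] {T : X ≃ₜ X}

/-- The incidence matrix between levels `n` and `n+1`; `KRM S n` corresponds to `M_{n+1}`
of the paper. -/
noncomputable def KRM (S : KRSystem X T) (n : ℕ) :
    Matrix (Fin (S.C (n + 1))) (Fin (S.C n)) ℤ := fun l k =>
  (Nat.card {j : ℕ // j < S.h (n + 1) l ∧ (⇑T)^[j] '' S.B (n + 1) l ⊆ S.B n k} : ℤ)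

/-- `KRP S m d` is the matrix `P_{m+d,m} = M_{m+d} ⋯ M_{m+1}` of the paper
(with `KRP S m 0 = 1`). -/
noncomputable def KRP (S : KRSystem X T) (m : ℕ) :
    (d : ℕ) → Matrix (Fin (S.C (m + d))) (Fin (S.C m)) ℤ
  | 0 => (1 : Matrix (Fin (S.C m)) (Fin (S.C m)) ℤ)
  | d + 1 => KRM S (m + d) * KRP S m d

/-- entrance time of `x` to the base of the `n`-th partition -/
noncomputable def KREntrance (S : KRSystem X T) (n : ℕ) (x : X) : ℕ :=
  sInf {j : ℕ | (⇑T)^[j] x ∈ ⋃ k : Fin (S.C n), S.B n k}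

/-- the suffix vector `s_n(x)` -/
noncomputable def KRSuffix (S : KRSystem X T) (n : ℕ) (x : X) (k : Fin (S.C n)) : ℕ :=
  Nat.card {j : ℕ // j < KREntrance S (n + 1) x ∧ (⇑T)^[j] x ∈ S.B n k}

open Function
open scoped Finset Matrix

section Iterate

variable [MeasurableSpace X] [BorelSpace X] (T)

lemma Homeomorph.measurableSet_image_iterate {s : Set X} (hs : MeasurableSet s) :
    ∀ j : ℕ, MeasurableSet ((⇑T)^[j] '' s)
  | 0 => by simpa using hs
  | j + 1 => by
    rw [Function.iterate_succ', Set.image_comp]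
    exact T.measurableEmbedding.measurableSet_image.mpr (measurableSet_image_iterate hs j)

lemma Homeomorph.measure_image_iterate {μ : Measure X} (hT : MeasurePreserving T μ μ)
    (s : Set X) : ∀ j : ℕ, μ ((⇑T)^[j] '' s) = μ s
  | 0 => by simp
  | j + 1 => by
    rw [Function.iterate_succ', Set.image_comp,
      ← hT.measure_preimage_emb T.measurableEmbedding, Set.preimage_image_eq _ T.injective,
      measure_image_iterate hT s j]

end Iterate

lemma Nat.card_subtype_lt_and (n : ℕ) (p : ℕ → Prop) [DecidablePred p] :
    Nat.card {j : ℕ // j < n ∧ p j} = #{j : Fin n | p j} := by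
  let e : {j : ℕ // j < n ∧ p j} ≃ {j : Fin n // p j} :=
    { toFun := fun j => ⟨⟨j, j.2.1⟩, j.2.2⟩
      invFun := fun j => ⟨j.1, j.1.isLt, j.2⟩
      left_inv := fun _ => rfl
      right_inv := fun _ => rfl }
  rw [Nat.card_congr e, Nat.card_eq_fintype_card, Fintype.card_subtype]

lemma abs_dotProduct_le_sum_mul_norm {ι : Type*} [Fintype ι] {p : ι → ℝ} (hp : 0 ≤ p)
    (u : ι → ℝ) : |p ⬝ᵥ u| ≤ (∑ i, p i) * ‖u‖ := by
  rw [Finset.sum_mul]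
  refine (Finset.abs_sum_le_sum_abs _ _).trans (Finset.sum_le_sum fun i _ => ?_)
  rw [abs_mul, abs_of_nonneg (hp i)]
  exact mul_le_mul_of_nonneg_left ((Real.norm_eq_abs (u i)).symm.trans_le (norm_le_pi_norm u i))
    (hp i)

namespace KRSystem

variable (S : KRSystem X T)

def atom (n : ℕ) (i : (k : Fin (S.C n)) × Fin (S.h n k)) : Set X :=
  (⇑T)^[i.2] '' S.B n i.1

lemma atom_base (n : ℕ) (k : Fin (S.C n)) : S.atom n ⟨k, ⟨0, S.h_pos n k⟩⟩ = S.B n k := by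
  simp [atom]

lemma pairwise_disjoint_atom (n : ℕ) : Pairwise (Disjoint on S.atom n) := by
  rintro ⟨k, j⟩ ⟨k', j'⟩ hne
  refine S.disj n k k' j j' j.isLt j'.isLt ?_
  rcases eq_or_ne k k' with rfl | hk
  · exact Or.inr fun hj => hne (congrArg (Sigma.mk k) (Fin.ext hj))
  · exact Or.inl hk

lemma iUnion_atom (n : ℕ) : ⋃ i, S.atom n i = Set.univ := by
  rw [← S.cover n]
  ext x
  simp only [atom, Set.mem_iUnion, Sigma.exists]
  exact ⟨fun ⟨k, j, hx⟩ => ⟨k, j, j.isLt, hx⟩, fun ⟨k, j, hj, hx⟩ => ⟨k, ⟨j, hj⟩, hx⟩⟩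

lemma pairwise_disjoint_base (n : ℕ) : Pairwise (Disjoint on S.B n) := by
  intro k k' hk
  have := S.pairwise_disjoint_atom n (i := ⟨k, ⟨0, S.h_pos n k⟩⟩) (j := ⟨k', ⟨0, S.h_pos n k'⟩⟩)
    (by simp [hk])
  rwa [onFun, atom_base, atom_base] at this

lemma atom_succ_subset_or_disjoint (n : ℕ) (i : (l : Fin (S.C (n + 1))) × Fin (S.h (n + 1) l))
    (i' : (k : Fin (S.C n)) × Fin (S.h n k)) :
    S.atom (n + 1) i ⊆ S.atom n i' ∨ Disjoint (S.atom (n + 1) i) (S.atom n i') := by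
  obtain ⟨k, j, hj, hsub⟩ := S.kr2 n i.1 i.2 i.2.isLt
  rcases eq_or_ne (⟨k, ⟨j, hj⟩⟩ : (k : Fin (S.C n)) × Fin (S.h n k)) i' with rfl | hne
  · exact Or.inl hsub
  · exact Or.inr ((S.pairwise_disjoint_atom n hne).mono_left hsub)

open Classical in
lemma KRM_eq_card (n : ℕ) (l : Fin (S.C (n + 1))) (k : Fin (S.C n)) :
    KRM S n l k = #{j : Fin (S.h (n + 1) l) | S.atom (n + 1) ⟨l, j⟩ ⊆ S.B n k} := by
  rw [KRM, Nat.card_subtype_lt_and]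
  rfl

lemma KRP_map_succ (m d : ℕ) : (KRP S m (d + 1)).map (Int.cast : ℤ → ℝ) =
    (KRM S (m + d)).map (Int.cast : ℤ → ℝ) * (KRP S m d).map (Int.cast : ℤ → ℝ) :=
  Matrix.map_mul (f := Int.castRingHom ℝ)

variable [MeasurableSpace X] [BorelSpace X] {μ : Measure X}

lemma measurableSet_atom (n : ℕ) (i : (k : Fin (S.C n)) × Fin (S.h n k)) :
    MeasurableSet (S.atom n i) :=
  T.measurableSet_image_iterate (S.clopen n i.1).isOpen.measurableSet i.2

lemma measure_atom (hT : MeasurePreserving T μ μ) (n : ℕ)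
    (i : (k : Fin (S.C n)) × Fin (S.h n k)) : μ (S.atom n i) = μ (S.B n i.1) :=
  T.measure_image_iterate hT _ _

variable [IsFiniteMeasure μ]

lemma measureReal_eq_sum_atom_inter (n : ℕ) {s : Set X} (hs : MeasurableSet s) :
    μ.real s = ∑ i, μ.real (S.atom n i ∩ s) := by
  conv_lhs => rw [← Set.univ_inter s, ← S.iUnion_atom n, Set.iUnion_inter]
  exact measureReal_iUnion_fintype
    (fun i j hij => (S.pairwise_disjoint_atom n hij).mono Set.inter_subset_left
      Set.inter_subset_left)
    fun i => (S.measurableSet_atom n i).inter hs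

lemma sum_height_mul_measureReal (hT : MeasurePreserving T μ μ) (n : ℕ) :
    ∑ k, (S.h n k : ℝ) * μ.real (S.B n k) = μ.real Set.univ := by
  rw [S.measureReal_eq_sum_atom_inter n MeasurableSet.univ, ← Finset.univ_sigma_univ,
    Finset.sum_sigma]
  refine Finset.sum_congr rfl fun k _ => ?_
  simp [Set.inter_univ, measureReal_def, S.measure_atom hT]

lemma sum_measureReal_base_le (n : ℕ) : ∑ k, μ.real (S.B n k) ≤ μ.real Set.univ := by
  rw [← measureReal_iUnion_fintype (S.pairwise_disjoint_base n)
    fun k => (S.clopen n k).isOpen.measurableSet]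
  exact measureReal_mono (Set.subset_univ _)

lemma measureReal_base_eq_sum (hT : MeasurePreserving T μ μ) (n : ℕ) (k : Fin (S.C n)) :
    μ.real (S.B n k) = ∑ l, (KRM S n l k : ℝ) * μ.real (S.B (n + 1) l) := by
  classical
  rw [S.measureReal_eq_sum_atom_inter (n + 1) (S.clopen n k).isOpen.measurableSet,
    ← Finset.univ_sigma_univ, Finset.sum_sigma]
  refine Finset.sum_congr rfl fun l _ => ?_
  have hpiece : ∀ j, μ.real (S.atom (n + 1) ⟨l, j⟩ ∩ S.B n k) =
      if S.atom (n + 1) ⟨l, j⟩ ⊆ S.B n k then μ.real (S.B (n + 1) l) else 0 := by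
    intro j
    split_ifs with hsub
    · rw [Set.inter_eq_left.mpr hsub, measureReal_def, S.measure_atom hT, measureReal_def]
    · rw [← S.atom_base n k] at hsub ⊢
      rw [((S.atom_succ_subset_or_disjoint n _ _).resolve_left hsub).inter_eq, measureReal_empty]
  simp only [hpiece, Finset.sum_ite, Finset.sum_const, smul_zero, add_zero, nsmul_eq_mul,
    S.KRM_eq_card, Int.cast_natCast]

/-- The measure vector `μ_n` of the paper. -/
def measureVec (μ : Measure X) (n : ℕ) : Fin (S.C n) → ℝ := fun k => μ.real (S.B n k)

lemma measureVec_eq_vecMul (hT : MeasurePreserving T μ μ) (n : ℕ) :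
    S.measureVec μ n = S.measureVec μ (n + 1) ᵥ* (KRM S n).map (Int.cast : ℤ → ℝ) := by
  funext k
  rw [measureVec, S.measureReal_base_eq_sum hT]
  simp only [Matrix.vecMul, dotProduct, Matrix.map_apply, measureVec, mul_comm]

lemma measureVec_dotProduct_KRP_mulVec (hT : MeasurePreserving T μ μ) {m : ℕ}
    (v : Fin (S.C m) → ℝ) : ∀ d : ℕ,
    S.measureVec μ (m + d) ⬝ᵥ ((KRP S m d).map (Int.cast : ℤ → ℝ) *ᵥ v) = S.measureVec μ m ⬝ᵥ v
  | 0 => by simp [KRP]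
  | d + 1 => by
    rw [KRP_map_succ, ← Matrix.mulVec_mulVec, Matrix.dotProduct_mulVec]
    exact (congrArg (· ⬝ᵥ _) (S.measureVec_eq_vecMul hT (m + d))).symm.trans
      (measureVec_dotProduct_KRP_mulVec hT v d)

variable [IsProbabilityMeasure μ]

lemma height_dotProduct_measureVec (hT : MeasurePreserving T μ μ) (n : ℕ) :
    (fun k => (S.h n k : ℝ)) ⬝ᵥ S.measureVec μ n = 1 :=
  (S.sum_height_mul_measureReal hT n).trans probReal_univ

lemma abs_measureVec_dotProduct_le (n : ℕ) (u : Fin (S.C n) → ℝ) :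
    |S.measureVec μ n ⬝ᵥ u| ≤ ‖u‖ :=
  (abs_dotProduct_le_sum_mul_norm (fun _ => measureReal_nonneg) u).trans
    (mul_le_of_le_one_left (norm_nonneg u) ((S.sum_measureReal_base_le n).trans_eq probReal_univ))

lemma measureVec_dotProduct_eq_zero_of_summable (hT : MeasurePreserving T μ μ) {m : ℕ}
    (v : Fin (S.C m) → ℝ)
    (hsum : Summable fun d : ℕ => ‖(KRP S m (d + 1)).map (Int.cast : ℤ → ℝ) *ᵥ v‖) :
    S.measureVec μ m ⬝ᵥ v = 0 := by
  have hle : ∀ d : ℕ,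
      |S.measureVec μ m ⬝ᵥ v| ≤ ‖(KRP S m (d + 1)).map (Int.cast : ℤ → ℝ) *ᵥ v‖ := fun d => by
    rw [← S.measureVec_dotProduct_KRP_mulVec hT v (d + 1)]
    exact S.abs_measureVec_dotProduct_le _ _
  exact abs_nonpos_iff.mp (ge_of_tendsto' hsum.tendsto_atTop_zero hle)

end KRSystem

theorem stmt7_general {X : Type*} [TopologicalSpace X]
    [MeasurableSpace X] [BorelSpace X]
    (T : X ≃ₜ X)
    (S : KRSystem X T)
    (α : ℝ) (m : ℕ)
    (v : Fin (S.C m) → ℝ) (w : Fin (S.C m) → ℤ)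
    (heq : ∀ l : Fin (S.C m), α * (S.h m l : ℝ) = v l + (w l : ℝ))
    (hsum : Summable fun d : ℕ =>
      ‖((KRP S m (d + 1)).map (Int.cast : ℤ → ℝ)).mulVec v‖)
    (μ : Measure X) (hμ : IsProbabilityMeasure μ) (hinv : Measure.map T μ = μ) :
    (∑ l : Fin (S.C m), (μ (S.B m l)).toReal * (w l : ℝ)) = α ∧
    ∀ d : ℕ, (∑ l : Fin (S.C (m + d)),
      (μ (S.B (m + d) l)).toReal *
        (((KRP S m d).map (Int.cast : ℤ → ℝ)).mulVec v) l) = 0 := by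
  have hT : MeasurePreserving T μ μ := ⟨T.measurable, hinv⟩
  have hv := S.measureVec_dotProduct_eq_zero_of_summable hT v hsum
  refine ⟨?_, fun d => (S.measureVec_dotProduct_KRP_mulVec hT v d).trans hv⟩
  have hw : (fun l => (w l : ℝ)) = α • (fun l => (S.h m l : ℝ)) - v := by
    ext l
    simp only [Pi.sub_apply, Pi.smul_apply, smul_eq_mul, heq l, add_sub_cancel_left]
  change S.measureVec μ m ⬝ᵥ (fun l => (w l : ℝ)) = α
  rw [hw, dotProduct_sub, dotProduct_smul, dotProduct_comm, S.height_dotProduct_measureVec hT,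
    hv, smul_eq_mul, mul_one, sub_zero]

/-- Given a minimal Cantor system with a nested sequence of CKR partitions
satisfying (KR1)–(KR6), if `α · P_m H_1 = v_m + w_m` (recall `P_m H_1 = H_m`) with
`Σ_{n>m} ‖P_{n,m} v_m‖_∞ < ∞`, then for every invariant probability measure `μ` and every
`n ≥ m` (written `n = m + d`): `α = ⟨μ_m, w_m⟩` and `⟨μ_n, P_{n,m} v_m⟩ = 0`. -/
theorem stmt7 {X : Type*} [TopologicalSpace X] [CompactSpace X]
    [TopologicalSpace.MetrizableSpace X] [TotallyDisconnectedSpace X] [Nonempty X]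
    [MeasurableSpace X] [BorelSpace X]
    (hni : ∀ x : X, ¬IsOpen ({x} : Set X))
    (T : X ≃ₜ X)
    (hmin : ∀ x : X, Dense (Set.range fun n : ℤ => (T.toEquiv ^ n) x))
    (S : KRSystem X T)
    (α : ℝ) (m : ℕ) (hm : 1 < m)
    (v : Fin (S.C m) → ℝ) (w : Fin (S.C m) → ℤ)
    (heq : ∀ l : Fin (S.C m), α * (S.h m l : ℝ) = v l + (w l : ℝ))
    (hsum : Summable fun d : ℕ =>
      ‖((KRP S m (d + 1)).map (Int.cast : ℤ → ℝ)).mulVec v‖)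
    (μ : Measure X) (hμ : IsProbabilityMeasure μ) (hinv : Measure.map T μ = μ) :
    (∑ l : Fin (S.C m), (μ (S.B m l)).toReal * (w l : ℝ)) = α ∧
    ∀ d : ℕ, (∑ l : Fin (S.C (m + d)),
      (μ (S.B (m + d) l)).toReal *
        (((KRP S m d).map (Int.cast : ℤ → ℝ)).mulVec v) l) = 0 :=
  stmt7_general T S α m v w heq hsum μ hμ hinv
end

section
/- Let (X,T) be a minimal Cantor system with a nested sequence of clopen Kakutani–Rohlin partitions satisfying (KR1)–(KR6), and let λ = exp(2πiα) be a continuous eigenvalue of (X,T). For each n, write α·P_n H_1 = v_n + w_n where w_n ∈ ℤ^{C_n} is a closest integer vector to α·P_n H_1 (so every entry of v_n has absolute value at most 1/2). Then max_{x ∈ X} |⟨s_n(x), v_n⟩| → 0 as n → ∞. -/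
open MeasureTheory

variable {X : Type*} [TopologicalSpace X] {T : X ≃ₜ X}

/-!
A continuous eigenfunction `f` has constant positive modulus, by minimality. If `t` and `r` are
the entrance times of `y` into the bases of levels `n` and `n + 1`, then
`r = t + ⟨s_n(y), H_n⟩`, hence `f (T^r y) = exp (2πi ⟨s_n(y), v_n⟩) f (T^t y)`. Both points lie
in the base of level `n`, and these bases shrink to a point, so for large `n` the pairing
`⟨s_n(y), v_n⟩` is uniformly close to an integer. Between times `t` and `r` the orbit of `y`
climbs whole towers of level `n`, and each one changes the pairing by some `v_n(k)` of size at
most `1/2`; by induction on the number of towers, the pairing then stays close to `0` itself.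
-/

open Filter Topology Real

theorem Nat.count_eq_ite_of_forall_eq {p : ℕ → Prop} [DecidablePred p] {a N : ℕ} (ha : a < N)
    (hp : ∀ j < N, p j → j = a) : Nat.count p N = if p a then 1 else 0 := by
  rw [Nat.count_eq_card_filter_range]
  split_ifs with h
  · refine Finset.card_eq_one.2 ⟨a, Finset.ext fun j => ?_⟩
    simp only [Finset.mem_filter, Finset.mem_range, Finset.mem_singleton]
    exact ⟨fun hj => hp j hj.1 hj.2, fun hj => hj ▸ ⟨ha, h⟩⟩
  · refine Finset.card_eq_zero.2 (Finset.filter_eq_empty_iff.2 fun j hj hpj => h ?_)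
    rwa [← hp j (Finset.mem_range.1 hj) hpj]

theorem abs_le_of_abs_sub_round_le {a η : ℝ} (hη : η < 1 / 4) (hround : |a - round a| ≤ η)
    (ha : |a| ≤ 1 / 2 + η) : |a| ≤ η := by
  by_cases h0 : round a = 0
  · simpa [h0] using hround
  have h1 : (1 : ℝ) ≤ |(round a : ℝ)| := by exact_mod_cast Int.one_le_abs h0
  have h2 := abs_sub_abs_le_abs_sub (round a : ℝ) a
  rw [abs_sub_comm] at h2
  linarith

theorem tendsto_iSup_abs_of_eventually_le {ι α : Type*} {l : Filter α} {g : α → ι → ℝ}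
    (h : ∀ ε > 0, ∀ᶠ n in l, ∀ i, |g n i| ≤ ε) : Tendsto (fun n => ⨆ i, |g n i|) l (𝓝 0) := by
  refine tendsto_order.2 ⟨fun a ha => Eventually.of_forall fun n =>
    ha.trans_le (Real.iSup_nonneg fun i => abs_nonneg _), fun a ha => ?_⟩
  filter_upwards [h (a / 2) (half_pos ha)] with n hn
  exact (Real.iSup_le hn (half_pos ha).le).trans_lt (half_lt_self ha)

theorem four_mul_abs_sub_round_le_norm_exp_sub_one (θ : ℝ) :
    4 * |θ - round θ| ≤ ‖Complex.exp (2 * π * Complex.I * θ) - 1‖ := by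
  set u := θ - round θ with hu
  have hperiod : Complex.exp (2 * π * Complex.I * θ) =
      Complex.exp (Complex.I * (2 * π * u : ℝ)) := by
    rw [show Complex.I * ((2 * π * u : ℝ) : ℂ) =
        2 * π * Complex.I * θ + (-round θ : ℤ) * (2 * π * Complex.I) by push_cast [hu]; ring,
      Complex.exp_add, Complex.exp_int_mul_two_pi_mul_I, mul_one]
  have hsin : 2 * |u| ≤ |Real.sin (π * u)| := by
    have hu2 : |π * u| ≤ π / 2 := by
      rw [abs_mul, abs_of_pos pi_pos]
      nlinarith [abs_sub_round θ, pi_pos]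
    have := Real.mul_abs_le_abs_sin hu2
    rwa [abs_mul, abs_of_pos pi_pos, ← mul_assoc, div_mul_cancel₀ _ pi_pos.ne'] at this
  rw [hperiod, Complex.norm_exp_I_mul_ofReal_sub_one, norm_mul, Real.norm_eq_abs,
    Real.norm_eq_abs, abs_two, show 2 * π * u / 2 = π * u by ring]
  linarith

theorem Equiv.Perm.apply_zpow_apply_eq {X Y : Type*} (e : Equiv.Perm X) {g : X → Y}
    (hg : ∀ x, g (e x) = g x) (n : ℤ) (x : X) : g ((e ^ n) x) = g x := by
  induction n using Int.induction_on generalizing x with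
  | zero => rfl
  | succ n ih => rw [zpow_add_one, Equiv.Perm.mul_apply, ih, hg]
  | pred n ih =>
    rw [zpow_sub_one, Equiv.Perm.mul_apply, ih, ← hg (e⁻¹ x), ← Equiv.Perm.mul_apply,
      mul_inv_cancel, Equiv.Perm.one_apply]

theorem apply_eq_of_dense_zpow_orbit {Y : Type*} [TopologicalSpace Y] [T2Space Y]
    {e : X ≃ₜ X} (hmin : ∀ x : X, Dense (Set.range fun n : ℤ => (e.toEquiv ^ n) x))
    {g : X → Y} (hgc : Continuous g) (hg : ∀ x, g (e x) = g x) (x y : X) : g y = g x :=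
  congrFun (hgc.ext_on (hmin x) continuous_const
    (by rintro - ⟨n, rfl⟩; exact Equiv.Perm.apply_zpow_apply_eq e.toEquiv hg n x)) y

theorem exists_pos_norm_eq_of_eigenfunction
    (hmin : ∀ x : X, Dense (Set.range fun n : ℤ => (T.toEquiv ^ n) x))
    {f : C(X, ℂ)} (hf0 : f ≠ 0) {c : ℂ} (hc : ‖c‖ = 1) (hf : ∀ x, f (T x) = c * f x) :
    ∃ r > 0, ∀ x, ‖f x‖ = r := by
  obtain ⟨x₀, hx₀⟩ := DFunLike.ne_iff.1 hf0
  refine ⟨‖f x₀‖, norm_pos_iff.2 hx₀, apply_eq_of_dense_zpow_orbit hmin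
    (continuous_norm.comp f.continuous) (fun x => ?_) x₀⟩
  simp [hf, hc]

namespace KRSystem

variable (S : KRSystem X T)

def base (n : ℕ) : Set X := ⋃ k, S.B n k

theorem base_succ_subset (n : ℕ) : S.base (n + 1) ⊆ S.base n := S.kr1 n

theorem base_antitone : Antitone S.base := antitone_nat_of_succ_le S.base_succ_subset

theorem isClosed_base (n : ℕ) : IsClosed (S.base n) :=
  isClosed_iUnion_of_finite fun k => (S.clopen n k).isClosed

theorem eventually_base_subset [CompactSpace X] {x₀ : X} (hx₀ : ⋂ n, S.base n = {x₀})
    {U : Set X} (hU : U ∈ 𝓝 x₀) : ∀ᶠ n in atTop, S.base n ⊆ U := by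
  obtain ⟨N, hN⟩ := exists_subset_nhds_of_isCompact' S.base_antitone.directed_ge
    (fun n => (S.isClosed_base n).isCompact) S.isClosed_base
    (by rw [hx₀]; rintro x rfl; exact hU)
  exact eventually_atTop.2 ⟨N, fun n hn => (S.base_antitone hn).trans hN⟩

theorem eq_of_mem_B {n : ℕ} {k k' : Fin (S.C n)} {y : X} (hy : y ∈ S.B n k)
    (hy' : y ∈ S.B n k') : k = k' := by
  by_contra hne
  have hdisj := S.disj n k k' 0 0 (S.h_pos n k) (S.h_pos n k') (Or.inl hne)
  simp only [Function.iterate_zero, Set.image_id] at hdisj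
  exact Set.disjoint_left.1 hdisj hy hy'

theorem iterate_notMem_base {n : ℕ} {k : Fin (S.C n)} {y : X} (hy : y ∈ S.B n k) {i : ℕ}
    (hi0 : 0 < i) (hi : i < S.h n k) : (⇑T)^[i] y ∉ S.base n := by
  intro hmem
  obtain ⟨k', hk'⟩ := Set.mem_iUnion.1 hmem
  exact Set.disjoint_left.1 (S.disj n k k' i 0 hi (S.h_pos n k') (Or.inr hi0.ne'))
    ⟨y, hy, rfl⟩ (by simpa using hk')

theorem iterate_h_mem_base {n : ℕ} {k : Fin (S.C n)} {y : X} (hy : y ∈ S.B n k) :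
    (⇑T)^[S.h n k] y ∈ S.base n := by
  rw [base, ← S.ret n]
  exact Set.mem_iUnion.2 ⟨k, y, hy, rfl⟩

theorem exists_iterate_mem_base (n : ℕ) (x : X) : ∃ j, (⇑T)^[j] x ∈ S.base n := by
  obtain ⟨k, j, hj, y, hy, rfl⟩ : ∃ k j, j < S.h n k ∧ x ∈ (⇑T)^[j] '' S.B n k := by
    simpa using Set.eq_univ_iff_forall.1 (S.cover n) x
  refine ⟨S.h n k - j, ?_⟩
  rw [← Function.iterate_add_apply, Nat.sub_add_cancel hj.le]
  exact S.iterate_h_mem_base hy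

end KRSystem

section Towers

variable (S : KRSystem X T)

theorem KREntrance_mem (n : ℕ) (x : X) : (⇑T)^[KREntrance S n x] x ∈ S.base n :=
  Nat.sInf_mem (S.exists_iterate_mem_base n x)

theorem KREntrance_le {n : ℕ} {x : X} {j : ℕ} (hj : (⇑T)^[j] x ∈ S.base n) :
    KREntrance S n x ≤ j :=
  Nat.sInf_le hj

theorem iterate_notMem_base_of_lt_KREntrance {n : ℕ} {x : X} {j : ℕ}
    (hj : j < KREntrance S n x) : (⇑T)^[j] x ∉ S.base n :=
  Nat.notMem_of_lt_sInf hj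

theorem KREntrance_eq_zero {n : ℕ} {y : X} (hy : y ∈ S.base n) : KREntrance S n y = 0 :=
  Nat.eq_zero_of_le_zero (KREntrance_le S (j := 0) hy)

theorem KREntrance_le_KREntrance_succ (n : ℕ) (x : X) :
    KREntrance S n x ≤ KREntrance S (n + 1) x :=
  KREntrance_le S (S.base_succ_subset n (KREntrance_mem S (n + 1) x))

theorem KREntrance_eq_add {n : ℕ} {x : X} {t : ℕ} (ht : ∀ j < t, (⇑T)^[j] x ∉ S.base n) :
    KREntrance S n x = t + KREntrance S n ((⇑T)^[t] x) := by
  have hle : t ≤ KREntrance S n x := not_lt.1 fun h => ht _ h (KREntrance_mem S n x)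
  have hshift := Nat.sInf_add (p := fun j => (⇑T)^[j] x ∈ S.base n) hle
  simp only [Function.iterate_add_apply] at hshift
  rw [add_comm]
  exact hshift.symm

open Classical in
theorem KRSuffix_eq_count (n : ℕ) (x : X) (k : Fin (S.C n)) :
    KRSuffix S n x k = Nat.count (fun j => (⇑T)^[j] x ∈ S.B n k) (KREntrance S (n + 1) x) := by
  rw [Nat.count_eq_card_filter_range, ← Nat.card_eq_finsetCard]
  exact Nat.card_congr (Equiv.subtypeEquivRight fun j => by simp)

theorem KRSuffix_eq_zero_of_mem_base_succ {n : ℕ} {x : X}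
    (hx : (⇑T)^[KREntrance S n x] x ∈ S.base (n + 1)) :
    KREntrance S (n + 1) x = KREntrance S n x ∧ KRSuffix S n x = 0 := by
  have hr : KREntrance S (n + 1) x = KREntrance S n x :=
    le_antisymm (KREntrance_le S hx) (KREntrance_le_KREntrance_succ S n x)
  refine ⟨hr, funext fun k => ?_⟩
  classical
  rw [KRSuffix_eq_count, hr, Pi.zero_apply, Nat.count_iff_forall_not]
  exact fun j hj hjk => iterate_notMem_base_of_lt_KREntrance S hj (Set.mem_iUnion.2 ⟨k, hjk⟩)

theorem exists_KRSuffix_eq_single_add {n : ℕ} {x : X}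
    (hx : (⇑T)^[KREntrance S n x] x ∉ S.base (n + 1)) :
    ∃ k x', KREntrance S n x' = 0 ∧
      KREntrance S (n + 1) x = KREntrance S n x + S.h n k + KREntrance S (n + 1) x' ∧
      KRSuffix S n x = Pi.single k 1 + KRSuffix S n x' := by
  set t := KREntrance S n x
  obtain ⟨k, hk⟩ := Set.mem_iUnion.1 (KREntrance_mem S n x)
  have hvisit : ∀ j < t + S.h n k, (⇑T)^[j] x ∈ S.base n → j = t := by
    intro j hj hmem
    by_contra hne
    rcases Nat.lt_or_gt_of_ne hne with hlt | hgt
    · exact iterate_notMem_base_of_lt_KREntrance S hlt hmem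
    · refine S.iterate_notMem_base hk (i := j - t) (by omega) (by omega) ?_
      rwa [← Function.iterate_add_apply, Nat.sub_add_cancel hgt.le]
  have hno : ∀ j < t + S.h n k, (⇑T)^[j] x ∉ S.base (n + 1) := fun j hj hmem =>
    hx (hvisit j hj (S.base_succ_subset n hmem) ▸ hmem)
  have hshift := KREntrance_eq_add S hno
  refine ⟨k, (⇑T)^[t + S.h n k] x, KREntrance_eq_zero S ?_, hshift, funext fun κ => ?_⟩
  · rw [add_comm, Function.iterate_add_apply]
    exact S.iterate_h_mem_base hk
  classical
  have htower : Nat.count (fun j => (⇑T)^[j] x ∈ S.B n κ) (t + S.h n k) =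
      (Pi.single k 1 : Fin (S.C n) → ℕ) κ := by
    rw [Nat.count_eq_ite_of_forall_eq (a := t) (by simpa using S.h_pos n k)
      fun j hj hjκ => hvisit j hj (Set.mem_iUnion.2 ⟨κ, hjκ⟩), Pi.single_apply]
    exact if_congr ⟨fun h => (S.eq_of_mem_B h hk), fun h => h ▸ hk⟩ rfl rfl
  rw [Pi.add_apply, KRSuffix_eq_count, KRSuffix_eq_count, hshift, Nat.count_add, htower]
  congr 2 with j
  rw [← Function.iterate_add_apply, add_comm j]

theorem KREntrance_succ_eq_add_sum (n : ℕ) (x : X) :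
    KREntrance S (n + 1) x = KREntrance S n x + ∑ k, KRSuffix S n x k * S.h n k := by
  induction hr : KREntrance S (n + 1) x using Nat.strong_induction_on generalizing x with
  | _ r ih =>
  by_cases hx : (⇑T)^[KREntrance S n x] x ∈ S.base (n + 1)
  · obtain ⟨hr', hs⟩ := KRSuffix_eq_zero_of_mem_base_succ S hx
    simp [← hr, hr', hs]
  · obtain ⟨k, x', h0, hr', hs⟩ := exists_KRSuffix_eq_single_add S hx
    have hx' := ih _ (by have := S.h_pos n k; omega) x' rfl
    simp only [hs, Pi.add_apply, Pi.single_apply, add_mul, ite_mul, one_mul, zero_mul,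
      Finset.sum_add_distrib, Finset.sum_ite_eq', Finset.mem_univ, if_true]
    omega

noncomputable def KRSuffixPairing (n : ℕ) (v : Fin (S.C n) → ℝ) (x : X) : ℝ :=
  ∑ k, (KRSuffix S n x k : ℝ) * v k

theorem abs_KRSuffixPairing_le {n : ℕ} {v : Fin (S.C n) → ℝ} (hv : ∀ k, |v k| ≤ 1 / 2)
    {η : ℝ} (hη : η < 1 / 4)
    (hround : ∀ y, |KRSuffixPairing S n v y - round (KRSuffixPairing S n v y)| ≤ η) (x : X) :
    |KRSuffixPairing S n v x| ≤ η := by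
  induction hr : KREntrance S (n + 1) x using Nat.strong_induction_on generalizing x with
  | _ r ih =>
  by_cases hx : (⇑T)^[KREntrance S n x] x ∈ S.base (n + 1)
  · obtain ⟨-, hs⟩ := KRSuffix_eq_zero_of_mem_base_succ S hx
    simpa [KRSuffixPairing, hs] using (abs_nonneg _).trans (hround x)
  · obtain ⟨k, x', -, hr', hs⟩ := exists_KRSuffix_eq_single_add S hx
    have hx' := ih _ (by have := S.h_pos n k; omega) x' rfl
    have hstep : KRSuffixPairing S n v x = v k + KRSuffixPairing S n v x' := by
      simp only [KRSuffixPairing, hs, Pi.add_apply, Pi.single_apply, Nat.cast_add, Nat.cast_ite,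
        Nat.cast_one, Nat.cast_zero, add_mul, ite_mul, one_mul, zero_mul,
        Finset.sum_add_distrib, Finset.sum_ite_eq', Finset.mem_univ, if_true]
    refine abs_le_of_abs_sub_round_le hη (hround x) ?_
    rw [hstep]
    exact (abs_add_le _ _).trans (add_le_add (hv k) hx')

theorem apply_iterate_KREntrance_succ {f : X → ℂ} {α : ℝ}
    (hf : ∀ x, f (T x) = Complex.exp (2 * π * Complex.I * α) * f x) (n : ℕ)
    (w : Fin (S.C n) → ℤ) (y : X) :
    f ((⇑T)^[KREntrance S (n + 1) y] y) =
      Complex.exp (2 * π * Complex.I * KRSuffixPairing S n (fun k => α * S.h n k - w k) y) *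
        f ((⇑T)^[KREntrance S n y] y) := by
  set c := Complex.exp (2 * π * Complex.I * α)
  have hiter (m : ℕ) (x : X) : f ((⇑T)^[m] x) = c ^ m * f x := by
    simpa using (Function.Semiconj.iterate_right (gb := (c * ·)) hf m) x
  set N := ∑ k, KRSuffix S n y k * S.h n k
  set M := ∑ k, (KRSuffix S n y k : ℤ) * w k
  have hθ : KRSuffixPairing S n (fun k => α * S.h n k - w k) y = α * N - M := by
    simp only [KRSuffixPairing, N, M, Nat.cast_sum, Nat.cast_mul, Int.cast_sum, Int.cast_mul,
      Int.cast_natCast, Finset.mul_sum, ← Finset.sum_sub_distrib]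
    exact Finset.sum_congr rfl fun k _ => by ring
  have hcN : c ^ N = Complex.exp (2 * π * Complex.I * (α * N - M : ℝ)) := by
    rw [show 2 * π * Complex.I * ((α * N - M : ℝ) : ℂ) =
        N * (2 * π * Complex.I * α) + (-M : ℤ) * (2 * π * Complex.I) by push_cast; ring,
      Complex.exp_add, Complex.exp_int_mul_two_pi_mul_I, mul_one, Complex.exp_nat_mul]
  rw [KREntrance_succ_eq_add_sum, hiter, hiter (KREntrance S n y), pow_add, hθ, ← hcN]
  ring

theorem eventually_abs_KRSuffixPairing_sub_round_le [CompactSpace X] {x₀ : X}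
    (hx₀ : ⋂ n, S.base n = {x₀}) {f : C(X, ℂ)} {r : ℝ} (hr : 0 < r) (hfr : ∀ x, ‖f x‖ = r)
    {α : ℝ} (hf : ∀ x, f (T x) = Complex.exp (2 * π * Complex.I * α) * f x)
    (w : (n : ℕ) → Fin (S.C n) → ℤ) {η : ℝ} (hη : 0 < η) :
    ∀ᶠ n in atTop, ∀ y, |KRSuffixPairing S n (fun k => α * S.h n k - w n k) y -
      round (KRSuffixPairing S n (fun k => α * S.h n k - w n k) y)| ≤ η := by
  have hU : f ⁻¹' Metric.ball (f x₀) (2 * r * η) ∈ 𝓝 x₀ :=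
    f.continuous.continuousAt (Metric.ball_mem_nhds _ (by positivity))
  filter_upwards [S.eventually_base_subset hx₀ hU] with n hn y
  set θ := KRSuffixPairing S n (fun k => α * S.h n k - w n k) y
  set a := (⇑T)^[KREntrance S (n + 1) y] y
  set b := (⇑T)^[KREntrance S n y] y
  have ha : dist (f a) (f x₀) < 2 * r * η :=
    hn (S.base_succ_subset n (KREntrance_mem S (n + 1) y))
  have hb : dist (f b) (f x₀) < 2 * r * η := hn (KREntrance_mem S n y)
  have hab : ‖Complex.exp (2 * π * Complex.I * θ) - 1‖ * r = ‖f a - f b‖ := by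
    rw [apply_iterate_KREntrance_succ S hf n (w n) y, ← hfr b, ← norm_mul, sub_one_mul]
  have hclose : ‖f a - f b‖ < 4 * η * r := by
    rw [← dist_eq_norm]
    linarith [dist_triangle_right (f a) (f b) (f x₀)]
  have hlower := mul_le_mul_of_nonneg_right (four_mul_abs_sub_round_le_norm_exp_sub_one θ) hr.le
  have h4 : 4 * |θ - round θ| * r < 4 * η * r := hlower.trans_lt (hab ▸ hclose)
  linarith [lt_of_mul_lt_mul_right h4 hr.le]

end Towers

theorem stmt8_general {X : Type*} [TopologicalSpace X] [CompactSpace X]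
    (T : X ≃ₜ X)
    (hmin : ∀ x : X, Dense (Set.range fun n : ℤ => (T.toEquiv ^ n) x))
    (S : KRSystem X T)
    (α : ℝ)
    (heig : ∃ f : C(X, ℂ), f ≠ 0 ∧
      ∀ x : X, f (T x) = Complex.exp (2 * Real.pi * Complex.I * α) * f x)
    (w : (n : ℕ) → Fin (S.C n) → ℤ)
    (hw : ∀ (n : ℕ) (l : Fin (S.C n)), |α * (S.h n l : ℝ) - (w n l : ℝ)| ≤ 1 / 2) :
    Filter.Tendsto
      (fun n : ℕ => ⨆ x : X,
        |∑ k : Fin (S.C n), (KRSuffix S n x k : ℝ) * (α * (S.h n k : ℝ) - (w n k : ℝ))|)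
      Filter.atTop (nhds 0) := by
  obtain ⟨f, hf0, hf⟩ := heig
  have hunit : ‖Complex.exp (2 * π * Complex.I * α)‖ = 1 := by
    rw [show 2 * π * Complex.I * α = (2 * π * α : ℝ) * Complex.I by push_cast; ring]
    exact Complex.norm_exp_ofReal_mul_I _
  obtain ⟨r, hr, hfr⟩ := exists_pos_norm_eq_of_eigenfunction hmin hf0 hunit hf
  obtain ⟨x₀, hx₀⟩ := S.kr3
  refine tendsto_iSup_abs_of_eventually_le fun ε hε => ?_
  have hη : min ε (1 / 8) < 1 / 4 := (min_le_right _ _).trans_lt (by norm_num)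
  filter_upwards [eventually_abs_KRSuffixPairing_sub_round_le S hx₀ hr hfr hf w
    (lt_min hε (by norm_num : (0 : ℝ) < 1 / 8))]
    with n hn x
  exact (abs_KRSuffixPairing_le S (hw n) hη hn x).trans (min_le_left _ _)

/-- Let `(X,T)` be a minimal Cantor system with a nested sequence of CKR
partitions satisfying (KR1)–(KR6), and let `exp(2πiα)` be a continuous eigenvalue.  Write
`α · P_n H_1 = v_n + w_n` with `w_n` a closest integer vector (entries of `v_n` of absolute
value `≤ 1/2`).  Then `max_{x ∈ X} |⟨s_n(x), v_n⟩| → 0` as `n → ∞`. -/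
theorem stmt8 {X : Type*} [TopologicalSpace X] [CompactSpace X]
    [TopologicalSpace.MetrizableSpace X] [TotallyDisconnectedSpace X] [Nonempty X]
    (hni : ∀ x : X, ¬IsOpen ({x} : Set X))
    (T : X ≃ₜ X)
    (hmin : ∀ x : X, Dense (Set.range fun n : ℤ => (T.toEquiv ^ n) x))
    (S : KRSystem X T)
    (α : ℝ)
    (heig : ∃ f : C(X, ℂ), f ≠ 0 ∧
      ∀ x : X, f (T x) = Complex.exp (2 * Real.pi * Complex.I * α) * f x)
    (w : (n : ℕ) → Fin (S.C n) → ℤ)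
    (hw : ∀ (n : ℕ) (l : Fin (S.C n)), |α * (S.h n l : ℝ) - (w n l : ℝ)| ≤ 1 / 2) :
    Filter.Tendsto
      (fun n : ℕ => ⨆ x : X,
        |∑ k : Fin (S.C n), (KRSuffix S n x k : ℝ) * (α * (S.h n k : ℝ) - (w n k : ℝ))|)
      Filter.atTop (nhds 0) :=
  stmt8_general T hmin S α heig w hw
end

section
/- Let X and Y be compact metric spaces, T : X → X and S : Y → Y homeomorphisms, μ a T-invariant Borel probability measure on X and ν an S-invariant Borel probability measure on Y. Suppose (Y,S) is topologically weakly mixing in the sense that every continuous eigenfunction of (Y,S) is constant. Let f ∈ C(X,ℤ) and g ∈ C(Y,ℤ) satisfy ∫ f dμ = ∫ g dν and ∫ f dμ ∉ ℤ. Then the function F : X×Y → ℤ defined by F(x,y) = f(x) − g(y) satisfies ∫_{X×Y} F d(μ⊗ν) = 0, but F is not a coboundary: there is no H ∈ C(X×Y, ℤ) with F(x,y) = H(x,y) − H(Tx,Sy) for all (x,y) ∈ X×Y. -/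
/-!
Suppose `f x - g y = H (x, y) - H (T x, S y)` with `H` continuous and integer valued. Since `Y`
is compact, `C(Y, ℤ)` is discrete, so `x ↦ H (x, ·)` takes only finitely many values. Fix
`x, x'` and let `D n := H (Tⁿ x, ·) - H (Tⁿ x', ·)`; telescoping the coboundary equation gives
`D 0 = D n ∘ Sⁿ + Kₙ` with constants `Kₙ` (the `g`-terms cancel). By pigeonhole `D m = D m'` for
some `m < m'`, so `D 0 ∘ S^p = D 0 + c` with `p = m' - m`; comparing maxima on the compact `Y`
gives `c = 0`. A continuous `S^p`-invariant function is a sum of its discrete Fourier components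
along the orbit, which are eigenfunctions of `S` and hence constant by weak mixing. So `D 0` is
constant, `H` splits as `φ x + ψ y`, `f = k + φ - φ ∘ T` for an integer `k`, and integrating
against the `T`-invariant `μ` gives `∫ f dμ = k ∈ ℤ`.
-/

open MeasureTheory Finset

def HasOnlyConstantEigenfunctions {Y : Type*} [TopologicalSpace Y] (S : Y → Y) : Prop :=
  ∀ f : C(Y, ℂ), f ≠ 0 → ∀ lam : ℂ, (∀ y : Y, f (S y) = lam * f y) →
    ∃ c : ℂ, ∀ y : Y, f y = c

theorem Finset.sum_range_succ_eq_of_apply_eq {G : Type*} [AddCommGroup G] (a : ℕ → G) {n : ℕ}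
    (h : a n = a 0) : ∑ j ∈ range n, a (j + 1) = ∑ j ∈ range n, a j := by
  rw [← add_left_inj (a 0), ← sum_range_succ', sum_range_succ, h]

theorem IsPrimitiveRoot.sum_pow_pow_eq_zero {R : Type*} [CommRing R] [IsDomain R] {ζ : R}
    {p j : ℕ} (hζ : IsPrimitiveRoot ζ p) (hj0 : j ≠ 0) (hjp : j < p) :
    ∑ k ∈ range p, (ζ ^ j) ^ k = 0 := by
  have h1 : ζ ^ j ≠ 1 := hζ.pow_ne_one_of_pos_of_lt hj0 hjp
  have h := geom_sum_mul (ζ ^ j) p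
  rw [← pow_mul, mul_comm j, pow_mul, hζ.pow_eq_one, one_pow, sub_self] at h
  exact (mul_eq_zero.mp h).resolve_right (sub_ne_zero.mpr h1)

namespace HasOnlyConstantEigenfunctions

variable {Y : Type*} [TopologicalSpace Y] {S : Y → Y}

theorem exists_const {e : Y → ℂ} (h : HasOnlyConstantEigenfunctions S) (he : Continuous e)
    (lam : ℂ) (heS : ∀ y, e (S y) = lam * e y) : ∃ c, ∀ y, e y = c := by
  by_cases he0 : ∀ y, e y = 0
  · exact ⟨0, he0⟩
  · exact h ⟨e, he⟩ (fun h0 => he0 fun y => DFunLike.congr_fun h0 y) lam heS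

theorem eq_of_iterate_invariant (h : HasOnlyConstantEigenfunctions S) (hS : Continuous S)
    {e : Y → ℂ} (he : Continuous e) {p : ℕ} (hp : p ≠ 0) (hper : ∀ y, e (S^[p] y) = e y)
    (y y' : Y) : e y = e y' := by
  set ζ : ℂ := Complex.exp (2 * Real.pi * Complex.I / p)
  have hζ : IsPrimitiveRoot ζ p := Complex.isPrimitiveRoot_exp p hp
  -- the discrete Fourier coefficients of the `p`-periodic sequence `j ↦ e (S^[j] y)`
  set φ : ℕ → Y → ℂ := fun k y => ∑ j ∈ range p, ζ ^ (k * j) * e (S^[j] y)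
  have hφ_eigen : ∀ k y, φ k (S y) = (ζ ^ k)⁻¹ * φ k y := by
    intro k y
    rw [eq_inv_mul_iff_mul_eq₀ (pow_ne_zero _ (hζ.ne_zero hp)), mul_sum]
    refine .trans ?_ (sum_range_succ_eq_of_apply_eq (fun j => ζ ^ (k * j) * e (S^[j] y)) ?_)
    · refine sum_congr rfl fun j _ => ?_
      rw [Function.iterate_succ_apply, mul_add, pow_add, mul_one]; ring
    · rw [mul_comm k, pow_mul, hζ.pow_eq_one, hper]; simp
  have hφ_const : ∀ k, ∃ c, ∀ y, φ k y = c := fun k =>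
    h.exists_const (continuous_finsetSum _ fun j _ =>
      continuous_const.mul (he.comp (hS.iterate j))) _ (hφ_eigen k)
  have hφ_sum : ∀ y, ∑ k ∈ range p, φ k y = p * e y := by
    intro y
    simp only [φ]
    rw [sum_comm, sum_eq_single_of_mem 0 (mem_range.mpr (Nat.pos_of_ne_zero hp))]
    · simp
    · intro j hj hj0
      simp_rw [mul_comm _ j, pow_mul, ← sum_mul,
        hζ.sum_pow_pow_eq_zero hj0 (mem_range.mp hj), zero_mul]
  choose c hc using hφ_const
  have hp' : (p : ℂ) ≠ 0 := Nat.cast_ne_zero.mpr hp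
  rw [← mul_right_inj' hp', ← hφ_sum, ← hφ_sum]
  simp only [hc]

end HasOnlyConstantEigenfunctions

instance ContinuousMap.discreteTopology_int {Y : Type*} [TopologicalSpace Y] [CompactSpace Y] :
    DiscreteTopology C(Y, ℤ) :=
  DiscreteTopology.of_forall_le_dist one_pos fun u v huv => by
    obtain ⟨y, hy⟩ := DFunLike.ne_iff.mp huv
    exact (Int.pairwise_one_le_dist hy).trans (ContinuousMap.dist_apply_le_dist y)

theorem ContinuousMap.finite_range_curry_int {X Y : Type*} [TopologicalSpace X] [CompactSpace X]
    [TopologicalSpace Y] [CompactSpace Y] (H : C(X × Y, ℤ)) : (Set.range H.curry).Finite :=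
  (isCompact_range H.curry.continuous).finite_of_discrete

theorem eq_zero_of_forall_comp_eq_add {Y α : Type*} [TopologicalSpace Y] [CompactSpace Y]
    [Nonempty Y] [AddCommGroup α] [LinearOrder α] [IsOrderedAddMonoid α] [TopologicalSpace α]
    [OrderClosedTopology α] {u : Y → α} (hu : Continuous u) {R : Y → Y} {c : α}
    (h : ∀ y, u (R y) = u y + c) : c = 0 := by
  obtain ⟨y₁, -, hy₁⟩ := isCompact_univ.exists_isMaxOn Set.univ_nonempty hu.continuousOn
  obtain ⟨y₂, -, hy₂⟩ := isCompact_univ.exists_isMinOn Set.univ_nonempty hu.continuousOn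
  have h₁ := hy₁ (Set.mem_univ (R y₁))
  have h₂ := hy₂ (Set.mem_univ (R y₂))
  simp only [Set.mem_ofPred_eq, h] at h₁ h₂
  exact le_antisymm ((add_le_iff_nonpos_right _).mp h₁) (le_add_iff_nonneg_right _ |>.mp h₂)

theorem sub_apply_iterate_eq_sum {Z G : Type*} [AddCommGroup G] {R : Z → Z} {h F : Z → G}
    (hF : ∀ z, F z = h z - h (R z)) (n : ℕ) (z : Z) :
    h z - h (R^[n] z) = ∑ j ∈ range n, F (R^[j] z) := by
  simp only [hF, ← Function.iterate_succ_apply' R]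
  exact (sum_range_sub' (fun j => h (R^[j] z)) n).symm

theorem HasOnlyConstantEigenfunctions.slice_sub_slice_eq {X Y : Type*} [TopologicalSpace X]
    [CompactSpace X] [TopologicalSpace Y] [CompactSpace Y] {T : X → X} {S : Y → Y}
    (hwm : HasOnlyConstantEigenfunctions S) (hS : Continuous S) {f : X → ℤ} {g : Y → ℤ}
    {H : C(X × Y, ℤ)} (hH : ∀ x y, f x - g y = H (x, y) - H (T x, S y)) (x x' : X) (y y' : Y) :
    H (x, y) - H (x', y) = H (x, y') - H (x', y') := by
  have : Nonempty Y := ⟨y⟩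
  set D : ℕ → C(Y, ℤ) := fun n => H.curry (T^[n] x) - H.curry (T^[n] x')
  set K : ℕ → ℤ := fun n => ∑ j ∈ range n, (f (T^[j] x) - f (T^[j] x'))
  -- the `g`-parts of the Birkhoff sums along the orbits of `(x, y)` and `(x', y)` cancel
  have hDK : ∀ n y, D 0 y = D n (S^[n] y) + K n := by
    intro n y
    have hsum := fun x => sub_apply_iterate_eq_sum (R := Prod.map T S) (h := H)
      (F := fun p => f p.1 - g p.2) (fun p => hH p.1 p.2) n (x, y)
    have h := hsum x
    have h' := hsum x'
    simp only [Prod.map_iterate, Prod.map_apply, sum_sub_distrib] at h h'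
    simp only [D, K, ContinuousMap.sub_apply, ContinuousMap.curry_apply,
      Function.iterate_zero_apply, sum_sub_distrib]
    omega
  obtain ⟨m, m', hmm', hpair⟩ :=
    (H.finite_range_curry_int.prod H.finite_range_curry_int).exists_lt_map_eq_of_forall_mem
      (f := fun n => (H.curry (T^[n] x), H.curry (T^[n] x')))
      fun n => Set.mk_mem_prod (Set.mem_range_self _) (Set.mem_range_self _)
  have hD : D m = D m' := by
    simp only [D, Prod.ext_iff] at hpair ⊢
    rw [hpair.1, hpair.2]
  have hshift : ∀ y, D 0 (S^[m' - m] y) = D 0 y + (K m - K m') := by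
    intro y
    rw [hDK m, ← Function.iterate_add_apply, Nat.add_sub_cancel' hmm'.le, hD, hDK m' y]
    ring
  have hc := eq_zero_of_forall_comp_eq_add (D 0).continuous hshift
  have hper : ∀ y, ((D 0 (S^[m' - m] y) : ℤ) : ℂ) = D 0 y := by
    intro y; rw [hshift, hc, add_zero]
  show D 0 y = D 0 y'
  exact_mod_cast hwm.eq_of_iterate_invariant hS (e := fun y => ((D 0 y : ℤ) : ℂ))
    (continuous_of_discreteTopology.comp (D 0).continuous) (Nat.sub_ne_zero_of_lt hmm') hper y y'

theorem MeasureTheory.MeasurePreserving.integral_const_add_sub_comp {X : Type*}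
    [MeasurableSpace X] {μ : Measure X} [IsProbabilityMeasure μ] {T : X → X}
    (hT : MeasurePreserving T μ μ) {φ : X → ℝ} (hφ : Integrable φ μ) (k : ℝ) :
    ∫ x, (k + (φ x - φ (T x))) ∂μ = k := by
  have hφT : Integrable (fun x => φ (T x)) μ := hT.integrable_comp_of_integrable hφ
  have hφT_eq : ∫ x, φ (T x) ∂μ = ∫ x, φ x ∂μ := by
    rw [← integral_map hT.aemeasurable (hT.map_eq.symm ▸ hφ.aestronglyMeasurable), hT.map_eq]
  rw [integral_add (f := fun _ => k) (g := fun x => φ x - φ (T x)) (integrable_const k)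
    (hφ.sub hφT), integral_sub hφ hφT, hφT_eq]
  simp

theorem stmt11_general {X Y : Type*} [MetricSpace X] [MetricSpace Y] [CompactSpace X] [CompactSpace Y]
    [MeasurableSpace X] [BorelSpace X] [MeasurableSpace Y] [BorelSpace Y]
    (T : X ≃ₜ X) (S : Y ≃ₜ Y)
    (μ : Measure X) (ν : Measure Y)
    (hμp : IsProbabilityMeasure μ) (hνp : IsProbabilityMeasure ν)
    (hμ : Measure.map T μ = μ)
    (hwm : ∀ f : C(Y, ℂ), f ≠ 0 → ∀ lam : ℂ, (∀ y : Y, f (S y) = lam * f y) →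
      ∃ c : ℂ, ∀ y : Y, f y = c)
    (f : C(X, ℤ)) (g : C(Y, ℤ))
    (heq : ∫ x, (f x : ℝ) ∂μ = ∫ y, (g y : ℝ) ∂ν)
    (hnotint : ¬ ∃ z : ℤ, ∫ x, (f x : ℝ) ∂μ = (z : ℝ)) :
    (∫ p : X × Y, ((f p.1 : ℝ) - (g p.2 : ℝ)) ∂(μ.prod ν)) = 0 ∧
    ¬ ∃ H : C(X × Y, ℤ), ∀ (x : X) (y : Y),
      f x - g y = H (x, y) - H (T x, S y) := by
  have hfc : Continuous fun x => (f x : ℝ) := continuous_of_discreteTopology.comp f.continuous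
  have hgc : Continuous fun y => (g y : ℝ) := continuous_of_discreteTopology.comp g.continuous
  refine ⟨?_, ?_⟩
  · have hfi : Integrable (fun p : X × Y => (f p.1 : ℝ)) (μ.prod ν) :=
      (hfc.comp continuous_fst).integrable_of_hasCompactSupport (.of_compactSpace _)
    have hgi : Integrable (fun p : X × Y => (g p.2 : ℝ)) (μ.prod ν) :=
      (hgc.comp continuous_snd).integrable_of_hasCompactSupport (.of_compactSpace _)
    rw [integral_sub hfi hgi, integral_fun_fst (fun x => (f x : ℝ)),
      integral_fun_snd (fun y => (g y : ℝ)), heq]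
    simp
  · rintro ⟨H, hH⟩
    obtain ⟨x₀⟩ := nonempty_of_isProbabilityMeasure μ
    obtain ⟨y₀⟩ := nonempty_of_isProbabilityMeasure ν
    have hslice := HasOnlyConstantEigenfunctions.slice_sub_slice_eq hwm S.continuous hH
    obtain ⟨k, hk⟩ : ∃ k : ℤ, ∀ x, f x = k + (H (x, y₀) - H (T x, y₀)) := by
      refine ⟨f x₀ - H (x₀, y₀) + H (T x₀, y₀), fun x => ?_⟩
      have := hslice (T x) (T x₀) (S y₀) y₀
      have := hH x y₀
      have := hH x₀ y₀
      omega
    refine hnotint ⟨k, ?_⟩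
    have hφc : Continuous fun x => (H (x, y₀) : ℝ) :=
      continuous_of_discreteTopology.comp (H.continuous.comp (.prodMk_left y₀))
    simp_rw [hk, Int.cast_add, Int.cast_sub]
    exact MeasurePreserving.integral_const_add_sub_comp ⟨T.continuous.measurable, hμ⟩
      (hφc.integrable_of_hasCompactSupport (.of_compactSpace _)) k

/-- If `(Y,S)` is topologically weakly mixing, `μ`, `ν` are invariant Borel
probability measures, `f ∈ C(X,ℤ)`, `g ∈ C(Y,ℤ)` with `∫ f dμ = ∫ g dν ∉ ℤ`, then
`F(x,y) = f(x) − g(y)` has zero integral against `μ ⊗ ν` but is not a coboundary of the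
product system. -/
theorem stmt11 {X Y : Type*} [MetricSpace X] [MetricSpace Y] [CompactSpace X] [CompactSpace Y]
    [MeasurableSpace X] [BorelSpace X] [MeasurableSpace Y] [BorelSpace Y]
    (T : X ≃ₜ X) (S : Y ≃ₜ Y)
    (μ : Measure X) (ν : Measure Y)
    (hμp : IsProbabilityMeasure μ) (hνp : IsProbabilityMeasure ν)
    (hμ : Measure.map T μ = μ) (hν : Measure.map S ν = ν)
    (hwm : ∀ f : C(Y, ℂ), f ≠ 0 → ∀ lam : ℂ, (∀ y : Y, f (S y) = lam * f y) →
      ∃ c : ℂ, ∀ y : Y, f y = c)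
    (f : C(X, ℤ)) (g : C(Y, ℤ))
    (heq : ∫ x, (f x : ℝ) ∂μ = ∫ y, (g y : ℝ) ∂ν)
    (hnotint : ¬ ∃ z : ℤ, ∫ x, (f x : ℝ) ∂μ = (z : ℝ)) :
    (∫ p : X × Y, ((f p.1 : ℝ) - (g p.2 : ℝ)) ∂(μ.prod ν)) = 0 ∧
    ¬ ∃ H : C(X × Y, ℤ), ∀ (x : X) (y : Y),
      f x - g y = H (x, y) - H (T x, S y) :=
  stmt11_general T S μ ν hμp hνp hμ hwm f g heq hnotint
end

section
/- Let a ∈ (0,1) be a rational number. Let G = ℤ × ℚ, τ_a : G → ℝ given by τ_a(v) = a·v(1) + (1−a)·v(2), G⁺ = {v ∈ G : τ_a(v) > 0} ∪ {0}, and u = (1,1). Then (G,G⁺,u) is a simple dimension group with distinguished order unit: G⁺ − G⁺ = G, G⁺ ∩ (−G⁺) = {0}, G⁺ + G⁺ ⊆ G⁺; G is unperforated (if n ≥ 1 and n·v ∈ G⁺ then v ∈ G⁺); (G,G⁺) satisfies the Riesz interpolation property; every element of G⁺ \ {0} is an order unit; and u is an order unit. -/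
/-- The trace functional `τ_a(v) = a·v₁ + (1−a)·v₂`, valued in `ℚ`. -/
def stmt13Tau (a : ℚ) (v : ℤ × ℚ) : ℚ := a * (v.1 : ℚ) + (1 - a) * v.2

lemma stmt13Tau_sub (a : ℚ) (v w : ℤ × ℚ) :
    stmt13Tau a (v - w) = stmt13Tau a v - stmt13Tau a w := by
  simp [stmt13Tau, Prod.fst_sub, Prod.snd_sub]; push_cast; ring

lemma stmt13Tau_add (a : ℚ) (v w : ℤ × ℚ) :
    stmt13Tau a (v + w) = stmt13Tau a v + stmt13Tau a w := by
  simp [stmt13Tau, Prod.fst_add, Prod.snd_add]; push_cast; ring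

lemma stmt13Tau_neg (a : ℚ) (v : ℤ × ℚ) : stmt13Tau a (-v) = -stmt13Tau a v := by
  simp [stmt13Tau]; push_cast; ring

lemma stmt13Tau_smul (a : ℚ) (n : ℕ) (v : ℤ × ℚ) :
    stmt13Tau a (n • v) = (n : ℚ) * stmt13Tau a v := by
  simp [stmt13Tau, Prod.smul_fst, Prod.smul_snd]; push_cast; ring

lemma stmt13_mem_iff (a : ℚ) (v : ℤ × ℚ) :
    v ∈ ({v : ℤ × ℚ | 0 < (a : ℝ) * (v.1 : ℝ) + (1 - (a : ℝ)) * (v.2 : ℝ)} ∪ {0})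
    ↔ 0 < stmt13Tau a v ∨ v = 0 := by
  have hcast : (a : ℝ) * (v.1 : ℝ) + (1 - (a : ℝ)) * (v.2 : ℝ) = ((stmt13Tau a v : ℚ) : ℝ) := by
    simp only [stmt13Tau]; push_cast; ring
  rw [Set.mem_union, Set.mem_setOf_eq, Set.mem_singleton_iff, hcast]
  constructor <;> rintro (h | h)
  · left; exact_mod_cast h
  · right; exact h
  · left; exact_mod_cast h
  · right; exact h

/-- For a rational `a ∈ (0,1)`, the group `G = ℤ × ℚ` with positive cone
`G⁺ = {v : τ_a(v) > 0} ∪ {0}`, where `τ_a(v) = a·v₁ + (1−a)·v₂`, and order unit `u = (1,1)`,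
is a simple dimension group with distinguished order unit. -/
theorem stmt13 (a : ℚ) (ha0 : 0 < a) (ha1 : a < 1) :
    IsSimpleDimensionGroup (ℤ × ℚ)
      ({v : ℤ × ℚ | 0 < (a : ℝ) * (v.1 : ℝ) + (1 - (a : ℝ)) * (v.2 : ℝ)} ∪ {0})
      (1, 1) := by
  have ha1' : 0 < 1 - a := by linarith
  have hmem := stmt13_mem_iff a
  constructor
  · infer_instance
  · -- pos_sub
    intro g
    have htpos : 0 < (1 - a) * ((1 + |stmt13Tau a g|) / (1 - a)) := by
      rw [mul_div_cancel₀ _ (ne_of_gt ha1')]; positivity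
    refine ⟨g + (0, (1 + |stmt13Tau a g|) / (1 - a)), ?_,
      (0, (1 + |stmt13Tau a g|) / (1 - a)), ?_, by ring⟩
    · rw [hmem]; left
      rw [stmt13Tau_add]
      have h2 : stmt13Tau a ((0 : ℤ), (1 + |stmt13Tau a g|) / (1 - a))
          = (1 - a) * ((1 + |stmt13Tau a g|) / (1 - a)) := by simp [stmt13Tau]
      rw [h2, mul_div_cancel₀ _ (ne_of_gt ha1')]
      have h1 : -|stmt13Tau a g| ≤ stmt13Tau a g := neg_abs_le _
      linarith
    · rw [hmem]; left
      have h2 : stmt13Tau a ((0 : ℤ), (1 + |stmt13Tau a g|) / (1 - a))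
          = (1 - a) * ((1 + |stmt13Tau a g|) / (1 - a)) := by simp [stmt13Tau]
      rw [h2]; exact htpos
  · -- antisymm
    intro g hg hg'
    rw [hmem] at hg hg'
    rcases hg with h | h
    · rcases hg' with h' | h'
      · exfalso; rw [stmt13Tau_neg] at h'; linarith
      · simpa using (neg_eq_zero.mp h')
    · exact h
  · -- add
    intro x hx y hy
    rw [hmem] at hx hy ⊢
    rcases hx with hx | hx
    · rcases hy with hy | hy
      · left; rw [stmt13Tau_add]; linarith
      · left; rw [hy, add_zero]; exact hx
    · rcases hy with hy | hy
      · left; rw [hx, zero_add]; exact hy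
      · right; rw [hx, hy, add_zero]
  · -- unperforated
    intro n v hn hv
    rw [hmem] at hv ⊢
    rcases hv with hv | hv
    · left
      rw [stmt13Tau_smul] at hv
      have hn' : (0 : ℚ) < (n : ℚ) := by exact_mod_cast hn
      nlinarith
    · right
      have h1 : n • v.1 = 0 := by rw [← Prod.smul_fst, hv]; rfl
      have h2 : n • v.2 = 0 := by rw [← Prod.smul_snd, hv]; rfl
      have hn0 : n ≠ 0 := by omega
      have e1 : v.1 = 0 := by
        rcases smul_eq_zero.mp h1 with h | h
        · exact absurd h hn0
        · exact h
      have e2 : v.2 = 0 := by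
        rcases smul_eq_zero.mp h2 with h | h
        · exact absurd h hn0
        · exact h
      exact Prod.ext e1 e2
  · -- riesz
    intro a₁ a₂ b₁ b₂ h11 h21 h12 h22
    rw [hmem] at h11 h21 h12 h22
    rcases h11 with h11 | h11
    rcases h21 with h21 | h21
    rcases h12 with h12 | h12
    rcases h22 with h22 | h22
    · -- all strict
      rw [stmt13Tau_sub] at h11 h21 h12 h22
      have hmm : max (stmt13Tau a a₁) (stmt13Tau a a₂) < min (stmt13Tau a b₁) (stmt13Tau a b₂) :=
        max_lt (lt_min (by linarith) (by linarith)) (lt_min (by linarith) (by linarith))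
      have hc : stmt13Tau a ((0 : ℤ),
          ((max (stmt13Tau a a₁) (stmt13Tau a a₂) + min (stmt13Tau a b₁) (stmt13Tau a b₂)) / 2)
            / (1 - a))
          = (max (stmt13Tau a a₁) (stmt13Tau a a₂) + min (stmt13Tau a b₁) (stmt13Tau a b₂)) / 2 := by
        simp [stmt13Tau]
        rw [mul_div_cancel₀ _ (ne_of_gt ha1')]
      refine ⟨((0 : ℤ),
          ((max (stmt13Tau a a₁) (stmt13Tau a a₂) + min (stmt13Tau a b₁) (stmt13Tau a b₂)) / 2)
            / (1 - a)), ?_, ?_, ?_, ?_⟩ <;> rw [hmem] <;> left <;> rw [stmt13Tau_sub, hc]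
      · have h1 := le_max_left (stmt13Tau a a₁) (stmt13Tau a a₂)
        have h2 := min_le_left (stmt13Tau a b₁) (stmt13Tau a b₂)
        linarith
      · have h1 := le_max_right (stmt13Tau a a₁) (stmt13Tau a a₂)
        have h2 := min_le_left (stmt13Tau a b₁) (stmt13Tau a b₂)
        linarith
      · have h1 := le_max_left (stmt13Tau a a₁) (stmt13Tau a a₂)
        have h2 := min_le_left (stmt13Tau a b₁) (stmt13Tau a b₂)
        linarith
      · have h1 := le_max_left (stmt13Tau a a₁) (stmt13Tau a a₂)
        have h2 := min_le_right (stmt13Tau a b₁) (stmt13Tau a b₂)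
        linarith
    · -- b₂ = a₂
      have he : b₂ = a₂ := by rwa [sub_eq_zero] at h22
      refine ⟨b₂, ?_, ?_, ?_, ?_⟩ <;> rw [hmem]
      · left; exact h21
      · right; rw [he, sub_self]
      · left; rw [stmt13Tau_sub] at h11 h12 ⊢; rw [he]; linarith
      · right; rw [sub_self]
    · -- b₁ = a₂
      have he : b₁ = a₂ := by rwa [sub_eq_zero] at h12
      refine ⟨b₁, ?_, ?_, ?_, ?_⟩ <;> rw [hmem]
      · left; exact h11
      · right; rw [he, sub_self]
      · right; rw [sub_self]
      · rw [he]; exact h22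
    · -- b₂ = a₁
      have he : b₂ = a₁ := by rwa [sub_eq_zero] at h21
      refine ⟨b₂, ?_, ?_, ?_, ?_⟩ <;> rw [hmem]
      · right; rw [he, sub_self]
      · exact h22
      · left; rw [stmt13Tau_sub] at h11 ⊢; rw [he]; linarith
      · right; rw [sub_self]
    · -- b₁ = a₁
      have he : b₁ = a₁ := by rwa [sub_eq_zero] at h11
      refine ⟨b₁, ?_, ?_, ?_, ?_⟩ <;> rw [hmem]
      · right; rw [he, sub_self]
      · exact h12
      · right; rw [sub_self]
      · rw [he]; exact h21
  · -- simple
    intro g hg hg0 v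
    rw [hmem] at hg
    have hgpos : 0 < stmt13Tau a g := by
      rcases hg with h | h
      · exact h
      · exact absurd h hg0
    obtain ⟨n, hn⟩ := exists_nat_gt (stmt13Tau a v / stmt13Tau a g)
    refine ⟨n, ?_⟩
    rw [hmem]; left
    rw [stmt13Tau_sub, stmt13Tau_smul]
    have h3 : stmt13Tau a v / stmt13Tau a g * stmt13Tau a g < (n : ℚ) * stmt13Tau a g :=
      mul_lt_mul_of_pos_right hn hgpos
    rw [div_mul_cancel₀ _ (ne_of_gt hgpos)] at h3
    linarith
  · -- unit_pos
    rw [hmem]; left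
    have h : stmt13Tau a (1, 1) = 1 := by simp [stmt13Tau]
    rw [h]; norm_num
  · -- unit_order
    intro v
    have hu : stmt13Tau a ((1 : ℤ), (1 : ℚ)) = 1 := by simp [stmt13Tau]
    obtain ⟨n, hn⟩ := exists_nat_gt (stmt13Tau a v)
    refine ⟨n, ?_⟩
    rw [hmem]; left
    rw [stmt13Tau_sub, stmt13Tau_smul, hu, mul_one]
    linarith
end

section
/- Let a ∈ (0,1) be a rational number, G = ℤ × ℚ, τ_a(v) = a·v(1) + (1−a)·v(2), G⁺ = {v ∈ G : τ_a(v) > 0} ∪ {0}, and u = (1,1). Then: (i) τ_a is the unique trace on (G,G⁺,u), i.e., every group homomorphism p : G → ℝ with p(G⁺) ⊆ [0,∞) and p(u) = 1 equals τ_a; (ii) the image subgroup I(G,G⁺,u) = ⋂_{τ trace} τ(G) equals ℚ; (iii) the infinitesimal subgroup {v ∈ G : τ(v) = 0 for every trace τ} is nontrivial, i.e., there exists a nonzero v ∈ G with τ_a(v) = 0. -/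
section UniqueTrace

variable {G : Type*} [AddCommGroup G] {u : G} {f p : G →+ ℝ}

theorem IsTrace.rat_le_of_lt (hp : IsTrace ({v | 0 < f v} ∪ {0}) u p) (hfu : f u = 1)
    {v : G} {r : ℚ} (hr : (r : ℝ) < f v) : (r : ℝ) ≤ p v := by
  have hden : (0 : ℝ) < r.den := by exact_mod_cast r.pos
  have hr_eq : (r : ℝ) = r.num / r.den := by exact_mod_cast (Rat.num_div_den r).symm
  have hmem : (r.den : ℤ) • v - r.num • u ∈ ({v | 0 < f v} ∪ {0} : Set G) := by
    left
    have : 0 < (r.den : ℝ) * (f v - r) := mul_pos hden (sub_pos.mpr hr)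
    simp only [Set.mem_ofPred_eq, map_sub, map_zsmul, hfu, zsmul_eq_mul]
    rw [hr_eq, mul_sub, mul_div_cancel₀ _ hden.ne'] at this
    push_cast
    linarith
  have hpos := hp.1 _ hmem
  simp only [map_sub, map_zsmul, hp.2, zsmul_eq_mul] at hpos
  push_cast at hpos
  rw [hr_eq, div_le_iff₀ hden]
  linarith

theorem IsTrace.eq_of_pos_cone (hp : IsTrace ({v | 0 < f v} ∪ {0}) u p) (hfu : f u = 1) :
    p = f := by
  ext v
  refine le_antisymm ?_ (le_of_forall_rat_lt_imp_le fun r hr ↦ hp.rat_le_of_lt hfu hr)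
  refine le_of_forall_lt_rat_imp_le fun r hr ↦ ?_
  have h := hp.rat_le_of_lt hfu (v := -v) (r := -r) (by push_cast; rw [map_neg]; linarith)
  push_cast at h
  rw [map_neg] at h
  linarith

theorem isTrace_pos_cone (hfu : f u = 1) : IsTrace ({v | 0 < f v} ∪ {0}) u f := by
  refine ⟨?_, hfu⟩
  rintro g (hg | rfl)
  · exact le_of_lt hg
  · simp

theorem iInter_range_of_pos_cone (hfu : f u = 1) :
    ⋂ τ ∈ {τ : G →+ ℝ | IsTrace ({v | 0 < f v} ∪ {0}) u τ}, Set.range τ = Set.range f := by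
  refine subset_antisymm (Set.biInter_subset_of_mem (isTrace_pos_cone hfu)) ?_
  refine Set.subset_iInter₂ fun τ hτ ↦ ?_
  rw [IsTrace.eq_of_pos_cone hτ hfu]

end UniqueTrace

def tauA (a : ℚ) : (ℤ × ℚ) →+ ℝ where
  toFun v := (a : ℝ) * (v.1 : ℝ) + (1 - (a : ℝ)) * (v.2 : ℝ)
  map_zero' := by simp
  map_add' v w := by simp only [Prod.fst_add, Prod.snd_add]; push_cast; ring

theorem tauA_apply (a : ℚ) (v : ℤ × ℚ) :
    tauA a v = ((a * v.1 + (1 - a) * v.2 : ℚ) : ℝ) := by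
  simp only [tauA, AddMonoidHom.coe_mk, ZeroHom.coe_mk]
  push_cast
  ring

theorem tauA_one_one (a : ℚ) : tauA a (1, 1) = 1 := by
  rw [tauA_apply]
  norm_num

theorem range_tauA {a : ℚ} (ha : a ≠ 1) : Set.range (tauA a) = Set.range ((↑) : ℚ → ℝ) := by
  have h1a : 1 - a ≠ 0 := sub_ne_zero.mpr ha.symm
  ext x
  constructor
  · rintro ⟨v, rfl⟩
    exact ⟨_, (tauA_apply a v).symm⟩
  · rintro ⟨q, rfl⟩
    refine ⟨(0, q / (1 - a)), ?_⟩
    rw [tauA_apply]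
    congr 1
    field_simp
    ring

theorem tauA_infinitesimal {a : ℚ} (ha : a ≠ 1) : tauA a (1, -a / (1 - a)) = 0 := by
  have h1a : 1 - a ≠ 0 := sub_ne_zero.mpr ha.symm
  rw [tauA_apply]
  field_simp
  push_cast
  ring

theorem stmt14_general (a : ℚ) (ha1 : a < 1) :
    (∀ p : (ℤ × ℚ) →+ ℝ,
      IsTrace ({v : ℤ × ℚ | 0 < (a : ℝ) * (v.1 : ℝ) + (1 - (a : ℝ)) * (v.2 : ℝ)} ∪ {0})
        (1, 1) p →
      ∀ v : ℤ × ℚ, p v = (a : ℝ) * (v.1 : ℝ) + (1 - (a : ℝ)) * (v.2 : ℝ)) ∧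
    ((⋂ τ ∈ {τ : (ℤ × ℚ) →+ ℝ |
        IsTrace ({v : ℤ × ℚ | 0 < (a : ℝ) * (v.1 : ℝ) + (1 - (a : ℝ)) * (v.2 : ℝ)} ∪ {0})
          (1, 1) τ}, Set.range τ)
      = Set.range ((↑) : ℚ → ℝ)) ∧
    (∃ v : ℤ × ℚ, v ≠ 0 ∧ (a : ℝ) * (v.1 : ℝ) + (1 - (a : ℝ)) * (v.2 : ℝ) = 0) := by
  refine ⟨fun p hp v ↦ ?_, ?_, ⟨(1, -a / (1 - a)), by simp, tauA_infinitesimal ha1.ne⟩⟩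
  · exact DFunLike.congr_fun (hp.eq_of_pos_cone (f := tauA a) (tauA_one_one a)) v
  · exact (iInter_range_of_pos_cone (f := tauA a) (tauA_one_one a)).trans (range_tauA ha1.ne)

/-- For a rational `a ∈ (0,1)`, `G = ℤ × ℚ`,
`τ_a(v) = a·v₁ + (1−a)·v₂`, `G⁺ = {v : τ_a(v) > 0} ∪ {0}` and `u = (1,1)`:
(i) `τ_a` is the unique trace on `(G,G⁺,u)`;
(ii) the image subgroup `I(G,G⁺,u) = ⋂_τ τ(G)` equals `ℚ`;
(iii) the infinitesimal subgroup is nontrivial. -/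
theorem stmt14 (a : ℚ) (ha0 : 0 < a) (ha1 : a < 1) :
    (∀ p : (ℤ × ℚ) →+ ℝ,
      IsTrace ({v : ℤ × ℚ | 0 < (a : ℝ) * (v.1 : ℝ) + (1 - (a : ℝ)) * (v.2 : ℝ)} ∪ {0})
        (1, 1) p →
      ∀ v : ℤ × ℚ, p v = (a : ℝ) * (v.1 : ℝ) + (1 - (a : ℝ)) * (v.2 : ℝ)) ∧
    ((⋂ τ ∈ {τ : (ℤ × ℚ) →+ ℝ |
        IsTrace ({v : ℤ × ℚ | 0 < (a : ℝ) * (v.1 : ℝ) + (1 - (a : ℝ)) * (v.2 : ℝ)} ∪ {0})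
          (1, 1) τ}, Set.range τ)
      = Set.range ((↑) : ℚ → ℝ)) ∧
    (∃ v : ℤ × ℚ, v ≠ 0 ∧ (a : ℝ) * (v.1 : ℝ) + (1 - (a : ℝ)) * (v.2 : ℝ) = 0) :=
  stmt14_general a ha1
end
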